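/- arXiv:2501.14916 — 5 statements merged into one kernel-verified Lean document; each statement's English description precedes it below -/
import Mathlib

section
/- Consider the DMMF process. Suppose R, U ⊆ {1,...,n} are nonempty disjoint subsets such that (1 − ∏_{k∈U}(1−p_k)) / (Σ_{j∈U} α_j) < ∏_{k∉R}(1−p_k) · (1 − ∏_{k∈R}(1−p_k)) / (Σ_{j∈R} α_j). Then there exists a constant C > 0 such that, almost surely, liminf_{t→∞} ( Σ_{i∈R} W_i[t] / Σ_{i∈R} α_i − Σ_{i∈U} W_i[t] / Σ_{i∈U} α_i ) / t ≥ C. -/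
/-!
A round in which some member of `R` requests but nobody outside `R` does is necessarily won by
`R`; such rounds occur with probability `∏_{k∉R} (1 - p k) * (1 - ∏_{k∈R} (1 - p k))`.
Conversely, `U` can only win a round in which one of its members requests, which happens with
probability `1 - ∏_{k∈U} (1 - p k)`. The request vectors of successive rounds are i.i.d., so by
the strong law of large numbers the frequencies of both kinds of rounds converge almost surely,
and the liminf of the normalized gap is at least the difference of the two ratios, which is
positive by hypothesis.
-/

open MeasureTheory ProbabilityTheory Filter

/-- Winner predicate: given fair shares `α`, previous win counts `Wprev`, and the requests `r`
in the current round, agent `i` wins iff it requests and beats (in normalized win count,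
ties broken by smallest index) every other requesting agent. -/
def winsAt {n : ℕ} (α : Fin n → ℝ) (Wprev : Fin n → ℕ) (r : Fin n → Bool) (i : Fin n) : Prop :=
  r i = true ∧ ∀ j : Fin n, r j = true →
    ((Wprev i : ℝ) / α i < (Wprev j : ℝ) / α j ∨
      ((Wprev i : ℝ) / α i = (Wprev j : ℝ) / α j ∧ i ≤ j))

open Classical in
/-- `W α r t i` : number of rounds, among the first `t` rounds, won by agent `i` under the
DMMF allocation rule, when the (sample-path) requests are given by `r` (`r t i = true` means
agent `i` requests in round `t+1`). -/
noncomputable def W {n : ℕ} (α : Fin n → ℝ) (r : ℕ → Fin n → Bool) : ℕ → Fin n → ℕ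
  | 0, _ => 0
  | t + 1, i => W α r t i + (if winsAt α (W α r t) (r t) i then 1 else 0)

/-- The subgroup stability criterion for the set `S`. -/
def StabCrit {n : ℕ} (α p : Fin n → ℝ) (S : Finset (Fin n)) : Prop :=
  ∀ R ⊆ S, R.Nonempty →
    (1 - ∏ k ∈ S, (1 - p k)) / (∑ k ∈ S, α k) ≤ (1 - ∏ k ∈ R, (1 - p k)) / (∑ k ∈ R, α k)

/-- The strict subgroup stability criterion for the set `S`. -/
def StabCritStrict {n : ℕ} (α p : Fin n → ℝ) (S : Finset (Fin n)) : Prop :=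
  StabCrit α p S ∧ ∀ R ⊂ S, R.Nonempty →
    (1 - ∏ k ∈ S, (1 - p k)) / (∑ k ∈ S, α k) < (1 - ∏ k ∈ R, (1 - p k)) / (∑ k ∈ R, α k)

/-- The hypotheses of the DMMF process: the requests `req t i` (request of agent `i` in
round `t+1`) are independent across agents and rounds, with `req t i` Bernoulli of
parameter `p i`; the fair shares `α i` are positive and sum to `1`. -/
structure IsDMMF {Ω : Type*} [MeasurableSpace Ω] (μ : Measure Ω) {n : ℕ}
    (α p : Fin n → ℝ) (req : ℕ → Fin n → Ω → Bool) : Prop where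
  isProb : IsProbabilityMeasure μ
  α_pos : ∀ i, 0 < α i
  α_sum : ∑ i, α i = 1
  p_mem : ∀ i, p i ∈ Set.Icc (0 : ℝ) 1
  meas : ∀ t i, Measurable (req t i)
  indep : iIndepFun
    (fun ti : ℕ × Fin n => req ti.1 ti.2) μ
  law : ∀ t i, μ {ω | req t i ω = true} = ENNReal.ofReal (p i)

open Finset Topology Function

lemma le_liminf_of_tendsto_of_le {ι : Type*} {l : Filter ι} [l.NeBot] {f g : ι → ℝ} {c b : ℝ}
    (hg : Tendsto g l (𝓝 c)) (hgf : ∀ t, g t ≤ f t) (hfb : ∀ t, f t ≤ b) :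
    c ≤ liminf f l :=
  hg.liminf_eq ▸ liminf_le_liminf (.of_forall hgf) hg.isBoundedUnder_ge
    (isBoundedUnder_of ⟨b, hfb⟩).isCoboundedUnder_ge

lemma tendsto_frequency_ae {Ω β : Type*} [MeasurableSpace Ω] [MeasurableSpace β]
    {μ : Measure Ω} [IsFiniteMeasure μ] {X : ℕ → Ω → β} (hX : Measurable (X 0))
    (hindep : Pairwise ((· ⟂ᵢ[μ] ·) on X)) (hident : ∀ s, IdentDistrib (X s) (X 0) μ μ)
    {A : Set β} [DecidablePred (· ∈ A)] (hA : MeasurableSet A) :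
    ∀ᵐ ω ∂μ, Tendsto (fun t : ℕ => (#{s ∈ range t | X s ω ∈ A} : ℝ) / t) atTop
      (𝓝 (μ.real (X 0 ⁻¹' A))) := by
  have h1 : Measurable (A.indicator (1 : β → ℝ)) := measurable_one.indicator hA
  have hslln := strong_law_ae_real (fun s => A.indicator 1 ∘ X s)
    ((integrable_const (1 : ℝ)).indicator (hX hA))
    (fun s t hst => (hindep hst).comp h1 h1) (fun s => (hident s).comp h1)
  rw [show A.indicator 1 ∘ X 0 = (X 0 ⁻¹' A).indicator 1 from rfl,
    integral_indicator_one (hX hA)] at hslln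
  filter_upwards [hslln] with ω hω
  simpa [Set.indicator_apply, sum_boole] using hω

section Allocation

open scoped Classical

variable {n : ℕ} {α : Fin n → ℝ}

lemma winsAt_unique {w : Fin n → ℕ} {u : Fin n → Bool} {i j : Fin n}
    (hi : winsAt α w u i) (hj : winsAt α w u j) : i = j := by
  rcases hi.2 j hj.1 with h₁ | ⟨h₁, h₂⟩ <;> rcases hj.2 i hi.1 with h₃ | ⟨h₃, h₄⟩
  · exact absurd (h₁.trans h₃) (lt_irrefl _)
  · exact absurd h₁ (h₃ ▸ lt_irrefl _)
  · exact absurd h₃ (h₁ ▸ lt_irrefl _)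
  · exact le_antisymm h₂ h₄

/-- The winner is the requester minimising `(w i / α i, i)` lexicographically. -/
lemma exists_winsAt (w : Fin n → ℕ) {u : Fin n → Bool} (hu : ∃ j, u j = true) :
    ∃ i, winsAt α w u i := by
  obtain ⟨i, hi, hmin⟩ := ({j | u j = true} : Finset (Fin n)).exists_min_image
    (fun j => toLex ((w j : ℝ) / α j, j)) (by simpa [Finset.Nonempty] using hu)
  refine ⟨i, by simpa using hi, fun j hj => ?_⟩
  exact Prod.Lex.toLex_le_toLex.1 (hmin j (by simpa using hj))

def silentOn (T : Finset (Fin n)) : Set (Fin n → Bool) :=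
  (T : Set (Fin n)).pi fun _ => {false}

instance (T : Finset (Fin n)) : DecidablePred (· ∈ silentOn T) := fun u =>
  decidable_of_iff (∀ k ∈ T, u k = false) (by simp [silentOn])

lemma card_winsAt_le_one (S : Finset (Fin n)) (w : Fin n → ℕ) (u : Fin n → Bool) :
    #{i ∈ S | winsAt α w u i} ≤ 1 :=
  card_le_one.2 fun _ hi _ hj => winsAt_unique (mem_filter.1 hi).2 (mem_filter.1 hj).2

lemma card_winsAt_eq_zero_of_mem_silentOn {S : Finset (Fin n)} (w : Fin n → ℕ)
    {u : Fin n → Bool} (hu : u ∈ silentOn S) : #{i ∈ S | winsAt α w u i} = 0 := by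
  refine card_eq_zero.2 (filter_eq_empty_iff.2 fun i hi hwin => ?_)
  simpa [hwin.1] using hu i hi

lemma one_le_card_winsAt {S : Finset (Fin n)} (w : Fin n → ℕ) {u : Fin n → Bool}
    (hu : u ∈ silentOn (univ \ S) \ silentOn univ) : 1 ≤ #{i ∈ S | winsAt α w u i} := by
  obtain ⟨hout, hsome⟩ := hu
  obtain ⟨i, hi⟩ := exists_winsAt (α := α) w (by simpa [silentOn] using hsome)
  have hiS : i ∈ S := by
    by_contra hiS
    simpa [hi.1] using hout i (by simp [hiS])
  exact one_le_card.2 ⟨i, mem_filter.2 ⟨hiS, hi⟩⟩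

lemma sum_W_eq_sum_card_winsAt (r : ℕ → Fin n → Bool) (S : Finset (Fin n)) (t : ℕ) :
    ∑ i ∈ S, W α r t i = ∑ s ∈ range t, #{i ∈ S | winsAt α (W α r s) (r s) i} := by
  induction t with
  | zero => simp [W]
  | succ t ih => simp only [W, sum_add_distrib, ih, sum_range_succ, card_filter]

lemma card_le_sum_W (r : ℕ → Fin n → Bool) (S : Finset (Fin n)) (t : ℕ) :
    #{s ∈ range t | r s ∈ silentOn (univ \ S) \ silentOn univ} ≤ ∑ i ∈ S, W α r t i := by
  rw [sum_W_eq_sum_card_winsAt, card_filter]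
  refine sum_le_sum fun s _ => ?_
  split_ifs with hs
  · exact one_le_card_winsAt _ hs
  · exact Nat.zero_le _

lemma sum_W_le_card (r : ℕ → Fin n → Bool) (S : Finset (Fin n)) (t : ℕ) :
    ∑ i ∈ S, W α r t i ≤ #{s ∈ range t | r s ∉ silentOn S} := by
  rw [sum_W_eq_sum_card_winsAt, card_filter]
  refine sum_le_sum fun s _ => ?_
  split_ifs with hs
  · exact (card_winsAt_eq_zero_of_mem_silentOn _ hs).le
  · exact card_winsAt_le_one _ _ _

lemma sum_W_le (r : ℕ → Fin n → Bool) (S : Finset (Fin n)) (t : ℕ) :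
    ∑ i ∈ S, W α r t i ≤ t :=
  (sum_W_le_card r S t).trans ((card_filter_le _ _).trans (card_range t).le)

lemma le_liminf_normalized_gap (r : ℕ → Fin n → Bool) {R U : Finset (Fin n)} {qR qU : ℝ}
    (hαR : 0 ≤ ∑ i ∈ R, α i) (hαU : 0 ≤ ∑ i ∈ U, α i)
    (hR : Tendsto (fun t : ℕ =>
      (#{s ∈ range t | r s ∈ silentOn (univ \ R) \ silentOn univ} : ℝ) / t) atTop (𝓝 qR))
    (hU : Tendsto (fun t : ℕ => (#{s ∈ range t | r s ∉ silentOn U} : ℝ) / t) atTop (𝓝 qU)) :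
    qR / (∑ i ∈ R, α i) - qU / (∑ i ∈ U, α i) ≤ liminf (fun t : ℕ =>
      ((∑ i ∈ R, (W α r t i : ℝ)) / (∑ i ∈ R, α i)
        - (∑ i ∈ U, (W α r t i : ℝ)) / (∑ i ∈ U, α i)) / t) atTop := by
  refine le_liminf_of_tendsto_of_le ((hR.div_const _).sub (hU.div_const _)) (fun t => ?_)
    (b := 1 / ∑ i ∈ R, α i) (fun t => ?_)
  · rw [div_right_comm, div_right_comm (b := (t : ℝ)), ← sub_div]
    refine div_le_div_of_nonneg_right (sub_le_sub ?_ ?_) t.cast_nonneg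
    · exact div_le_div_of_nonneg_right (mod_cast card_le_sum_W r R t) hαR
    · exact div_le_div_of_nonneg_right (mod_cast sum_W_le_card r U t) hαU
  · calc _ ≤ ((∑ i ∈ R, (W α r t i : ℝ)) / (∑ i ∈ R, α i)) / t := by
          gcongr
          exact sub_le_self _ (by positivity)
      _ ≤ ((t : ℝ) / ∑ i ∈ R, α i) / t := by
          gcongr
          exact_mod_cast sum_W_le r R t
      _ ≤ 1 / ∑ i ∈ R, α i := by
          rw [div_right_comm]
          exact div_le_div_of_nonneg_right (div_self_le_one _) hαR

end Allocation

section Requests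

variable {Ω : Type*} [MeasurableSpace Ω] {μ : Measure Ω} {n : ℕ} {α p : Fin n → ℝ}
  {req : ℕ → Fin n → Ω → Bool}

def requestProfile (req : ℕ → Fin n → Ω → Bool) (s : ℕ) (ω : Ω) : Fin n → Bool :=
  fun k => req s k ω

namespace IsDMMF

lemma measurable_requestProfile (h : IsDMMF μ α p req) (s : ℕ) :
    Measurable (requestProfile req s) :=
  measurable_pi_lambda _ (h.meas s)

lemma measure_req_eq_false (h : IsDMMF μ α p req) (s : ℕ) (k : Fin n) :
    μ {ω | req s k ω = false} = ENNReal.ofReal (1 - p k) := by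
  have := h.isProb
  have hcompl : {ω | req s k ω = false} = {ω | req s k ω = true}ᶜ := by ext; simp
  rw [hcompl, prob_compl_eq_one_sub (s := {ω | req s k ω = true})
    (h.meas s k (measurableSet_singleton true)), h.law,
    ENNReal.ofReal_sub 1 (h.p_mem k).1, ENNReal.ofReal_one]

lemma map_req (h : IsDMMF μ α p req) (s : ℕ) (k : Fin n) : μ.map (req s k) = μ.map (req 0 k) := by
  refine Measure.ext_of_singleton fun b => ?_
  rw [Measure.map_apply (h.meas s k) (measurableSet_singleton b),
    Measure.map_apply (h.meas 0 k) (measurableSet_singleton b)]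
  cases b
  · exact (h.measure_req_eq_false s k).trans (h.measure_req_eq_false 0 k).symm
  · exact (h.law s k).trans (h.law 0 k).symm

lemma map_requestProfile (h : IsDMMF μ α p req) (s : ℕ) :
    μ.map (requestProfile req s) = Measure.pi fun k => μ.map (req 0 k) := by
  have hrow : iIndepFun (req s) μ :=
    h.indep.precomp (g := fun k => (s, k)) fun _ _ hk => (Prod.mk.inj hk).2
  change μ.map (fun ω k => req s k ω) = _
  rw [hrow.map_fun_eq_pi_map fun k => (h.meas s k).aemeasurable]
  simp_rw [h.map_req s]

lemma identDistrib_requestProfile (h : IsDMMF μ α p req) (s : ℕ) :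
    IdentDistrib (requestProfile req s) (requestProfile req 0) μ μ :=
  ⟨(h.measurable_requestProfile s).aemeasurable, (h.measurable_requestProfile 0).aemeasurable,
    by rw [h.map_requestProfile, h.map_requestProfile]⟩

lemma indepFun_requestProfile (h : IsDMMF μ α p req) {s t : ℕ} (hst : s ≠ t) :
    IndepFun (requestProfile req s) (requestProfile req t) μ := by
  have hdisj : Disjoint ({s} ×ˢ univ : Finset (ℕ × Fin n)) ({t} ×ˢ univ) := by
    simp [disjoint_left, hst.symm]
  exact (h.indep.indepFun_finset _ _ hdisj fun q => h.meas q.1 q.2).comp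
    (φ := fun v k => v ⟨(s, k), by simp⟩) (ψ := fun v k => v ⟨(t, k), by simp⟩)
    (measurable_pi_lambda _ fun _ => measurable_pi_apply _)
    (measurable_pi_lambda _ fun _ => measurable_pi_apply _)

lemma measureReal_silentOn (h : IsDMMF μ α p req) (T : Finset (Fin n)) :
    μ.real (requestProfile req 0 ⁻¹' silentOn T) = ∏ k ∈ T, (1 - p k) := by
  have := h.isProb
  have : ∀ k, IsProbabilityMeasure (μ.map (req 0 k)) :=
    fun k => Measure.isProbabilityMeasure_map (h.meas 0 k).aemeasurable
  rw [← map_measureReal_apply (h.measurable_requestProfile 0)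
    (Set.to_countable _).measurableSet, measureReal_def,
    h.map_requestProfile, silentOn, Measure.pi_pi_finset, ENNReal.toReal_prod]
  refine prod_congr rfl fun k _ => ?_
  rw [Measure.map_apply (h.meas 0 k) (measurableSet_singleton false)]
  exact (congrArg ENNReal.toReal (h.measure_req_eq_false 0 k)).trans
    (ENNReal.toReal_ofReal (sub_nonneg.2 (h.p_mem k).2))

lemma measureReal_silentOn_sdiff (h : IsDMMF μ α p req) (R : Finset (Fin n)) :
    μ.real (requestProfile req 0 ⁻¹' (silentOn (univ \ R) \ silentOn univ))
      = (∏ k ∈ univ \ R, (1 - p k)) * (1 - ∏ k ∈ R, (1 - p k)) := by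
  have := h.isProb
  have hsub : silentOn (univ : Finset (Fin n)) ⊆ silentOn (univ \ R) :=
    Set.pi_mono' (fun _ _ => subset_rfl) (by simp)
  rw [Set.preimage_sdiff, measureReal_sdiff (Set.preimage_mono hsub)
    (h.measurable_requestProfile 0 (Set.to_countable _).measurableSet),
    h.measureReal_silentOn, h.measureReal_silentOn, ← prod_sdiff (subset_univ R)]
  ring

lemma measureReal_compl_silentOn (h : IsDMMF μ α p req) (U : Finset (Fin n)) :
    μ.real (requestProfile req 0 ⁻¹' (silentOn U)ᶜ) = 1 - ∏ k ∈ U, (1 - p k) := by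
  have := h.isProb
  rw [Set.preimage_compl, probReal_compl_eq_one_sub
    (h.measurable_requestProfile 0 (Set.to_countable _).measurableSet), h.measureReal_silentOn]

lemma tendsto_frequency_requestProfile (h : IsDMMF μ α p req) (A : Set (Fin n → Bool))
    [DecidablePred (· ∈ A)] :
    ∀ᵐ ω ∂μ, Tendsto (fun t : ℕ => (#{s ∈ range t | requestProfile req s ω ∈ A} : ℝ) / t) atTop
      (𝓝 (μ.real (requestProfile req 0 ⁻¹' A))) :=
  have := h.isProb
  tendsto_frequency_ae (h.measurable_requestProfile 0) (fun _ _ => h.indepFun_requestProfile)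
    h.identDistrib_requestProfile (Set.to_countable A).measurableSet

end IsDMMF

end Requests

theorem dmmf_necessary_condition_general
    {Ω : Type*} [MeasurableSpace Ω] (μ : Measure Ω) {n : ℕ}
    (α p : Fin n → ℝ) (req : ℕ → Fin n → Ω → Bool) (h : IsDMMF μ α p req)
    (R U : Finset (Fin n))
    (hcond : (1 - ∏ k ∈ U, (1 - p k)) / (∑ j ∈ U, α j)
      < (∏ k ∈ Finset.univ \ R, (1 - p k)) * ((1 - ∏ k ∈ R, (1 - p k)) / (∑ j ∈ R, α j))) :
    ∃ C : ℝ, 0 < C ∧ ∀ᵐ ω ∂μ,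
      C ≤ liminf (fun t : ℕ =>
        ((∑ i ∈ R, (W α (fun s k => req s k ω) t i : ℝ)) / (∑ i ∈ R, α i)
          - (∑ i ∈ U, (W α (fun s k => req s k ω) t i : ℝ)) / (∑ i ∈ U, α i)) / t) atTop := by
  have hα : ∀ S : Finset (Fin n), 0 ≤ ∑ i ∈ S, α i := fun S => sum_nonneg fun i _ => (h.α_pos i).le
  refine ⟨(∏ k ∈ univ \ R, (1 - p k)) * (1 - ∏ k ∈ R, (1 - p k)) / ∑ i ∈ R, α i
    - (1 - ∏ k ∈ U, (1 - p k)) / ∑ i ∈ U, α i, by rwa [sub_pos, mul_div_assoc], ?_⟩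
  filter_upwards [h.tendsto_frequency_requestProfile (silentOn (univ \ R) \ silentOn univ),
    h.tendsto_frequency_requestProfile (silentOn U)ᶜ] with ω hR hU
  rw [h.measureReal_silentOn_sdiff] at hR
  rw [h.measureReal_compl_silentOn] at hU
  exact le_liminf_normalized_gap (requestProfile req · ω) (hα R) (hα U) hR hU

/-- Necessary condition for stability. If disjoint nonempty sets `R, U`
satisfy `(1 − ∏_{k∈U}(1−p k))/Σ_{j∈U} α j < ∏_{k∉R}(1−p k) · (1 − ∏_{k∈R}(1−p k))/Σ_{j∈R} α j`,
then there is `C > 0` such that almost surely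
`liminf_t (Σ_{i∈R} W i t / Σ_{i∈R} α i − Σ_{i∈U} W i t / Σ_{i∈U} α i)/t ≥ C`. -/
theorem dmmf_necessary_condition
    {Ω : Type*} [MeasurableSpace Ω] (μ : Measure Ω) {n : ℕ}
    (α p : Fin n → ℝ) (req : ℕ → Fin n → Ω → Bool) (h : IsDMMF μ α p req)
    (R U : Finset (Fin n)) (hRU : Disjoint R U) (hR : R.Nonempty) (hU : U.Nonempty)
    (hcond : (1 - ∏ k ∈ U, (1 - p k)) / (∑ j ∈ U, α j)
      < (∏ k ∈ Finset.univ \ R, (1 - p k)) * ((1 - ∏ k ∈ R, (1 - p k)) / (∑ j ∈ R, α j))) :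
    ∃ C : ℝ, 0 < C ∧ ∀ᵐ ω ∂μ,
      C ≤ liminf (fun t : ℕ =>
        ((∑ i ∈ R, (W α (fun s k => req s k ω) t i : ℝ)) / (∑ i ∈ R, α i)
          - (∑ i ∈ U, (W α (fun s k => req s k ω) t i : ℝ)) / (∑ i ∈ U, α i)) / t) atTop :=
  dmmf_necessary_condition_general μ α p req h R U hcond
end

section
/- In the Threshold Game with q = 1/4 and ε = 1/9 there is no pure Nash equilibrium: for every (p_1, p_2) ∈ [0,1]×[0,1], either there exists p'_1 ∈ [0,1] with U_1(p'_1, p_2) > U_1(p_1, p_2), or there exists p'_2 ∈ [0,1] with U_2(p_1, p'_2) > U_2(p_1, p_2). -/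
/-- Expected value of an agent conditioned on requesting under the `p`-threshold strategy,
for the two-point distribution taking value `1` w.p. `q = 1/4` and value `ε = 1/9` w.p. `3/4`. -/
noncomputable def Vtwo (p : ℝ) : ℝ :=
  if p ≤ 1 / 4 then 1 else (1 / 4 + (1 / 9) * (p - 1 / 4)) / p

/-- Long-run per-round win rate of an agent requesting with probability `a` against an
opponent requesting with probability `b`, in the two-agent symmetric DMMF process. -/
noncomputable def winRate (a b : ℝ) : ℝ :=
  if a < b * (1 - a) then a
  else if b < a * (1 - b) then a * (1 - b)
  else (1 - (1 - a) * (1 - b)) / 2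

/-- Payoff of player 1 in the Threshold Game. -/
noncomputable def Uone (p₁ p₂ : ℝ) : ℝ := Vtwo p₁ * winRate p₁ p₂

/-- Payoff of player 2 in the Threshold Game. -/
noncomputable def Utwo (p₁ p₂ : ℝ) : ℝ := Vtwo p₂ * winRate p₂ p₁

/-!
Let `g p = Vtwo p * p`, the expected value of the top `p`-quantile of values; `g` is strictly
increasing. An agent at `p < p' (1 - p)`, against an opponent at `p'`, wins every request, so its
payoff is `g p`, and it gains by raising its rate to `p' / (1 + p')`, the largest rate at which it
still always wins. Otherwise both agents win at the common rate `(1 - (1 - p) (1 - p')) / 2`, and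
the agent with the larger rate gains by deviating: to `1` if the opponent plays at most `1/4`, to
`1/4` if the opponent plays in `(1/4, 1/3]`, and down to `p' / (1 + p')` if the opponent plays
above `1/3`.
-/

lemma Vtwo_of_le {p : ℝ} (h : p ≤ 1 / 4) : Vtwo p = 1 := if_pos h

lemma Vtwo_of_gt {p : ℝ} (h : 1 / 4 < p) : Vtwo p = (2 + p) / (9 * p) := by
  rw [Vtwo, if_neg h.not_ge]
  field_simp
  ring

lemma winRate_of_lt {a b : ℝ} (h : a < b * (1 - a)) : winRate a b = a := if_pos h

lemma winRate_of_gt {a b : ℝ} (h₁ : b * (1 - a) ≤ a) (h₂ : b < a * (1 - b)) :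
    winRate a b = a * (1 - b) := by
  rw [winRate, if_neg h₁.not_gt, if_pos h₂]

lemma winRate_of_mid {a b : ℝ} (h₁ : b * (1 - a) ≤ a) (h₂ : a * (1 - b) ≤ b) :
    winRate a b = (1 - (1 - a) * (1 - b)) / 2 := by
  rw [winRate, if_neg h₁.not_gt, if_neg h₂.not_gt]

lemma winRate_div_one_add_self {b : ℝ} (hb : 0 ≤ b) :
    winRate (b / (1 + b)) b = b / (1 + b) := by
  have hb₁ : 0 < 1 + b := by linarith
  have hc : b * (1 - b / (1 + b)) = b / (1 + b) := by field_simp; ring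
  rw [winRate_of_mid hc.le]
  · field_simp; ring
  · rw [div_mul_eq_mul_div, div_le_iff₀ hb₁]; nlinarith

lemma strictMono_Vtwo_mul_self : StrictMono fun p : ℝ => Vtwo p * p := by
  have key : ∀ p, Vtwo p * p = if p ≤ 1 / 4 then p else (2 + p) / 9 := by
    intro p
    split_ifs with h
    · rw [Vtwo_of_le h, one_mul]
    · have hp : 0 < p := by linarith [not_le.1 h]
      rw [Vtwo_of_gt (not_le.1 h)]; field_simp
  intro p p' hpp'
  simp only [key]
  split_ifs <;> linarith

def HasBetterReply (x y : ℝ) : Prop := ∃ x' ∈ Set.Icc (0 : ℝ) 1, Uone x y < Uone x' y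

lemma hasBetterReply_of_lt {x y : ℝ} (hy : 0 ≤ y) (h : x < y * (1 - x)) :
    HasBetterReply x y := by
  have hy₁ : 0 < 1 + y := by linarith
  refine ⟨y / (1 + y), ⟨by positivity, (div_le_one hy₁).2 (by linarith)⟩, ?_⟩
  rw [Uone, Uone, winRate_of_lt h, winRate_div_one_add_self hy]
  exact strictMono_Vtwo_mul_self ((lt_div_iff₀ hy₁).2 (by linarith))

lemma Uone_eq_of_mid {x y : ℝ} (hx : 1 / 4 < x) (h₁ : y * (1 - x) ≤ x)
    (h₂ : x * (1 - y) ≤ y) :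
    Uone x y = (2 + x) * (x + y - x * y) / (18 * x) := by
  have hx₀ : x ≠ 0 := by positivity
  rw [Uone, winRate_of_mid h₁ h₂, Vtwo_of_gt hx]
  field_simp
  ring

lemma Uone_lt_Uone_one_of_mid {x y : ℝ} (hy : y ≤ 1 / 4)
    (h₁ : y * (1 - x) ≤ x) (h₂ : x * (1 - y) ≤ y) : Uone x y < Uone 1 y := by
  have hdev : Uone 1 y = (1 - y) / 3 := by
    rw [Uone, winRate_of_gt (by norm_num) (by linarith), Vtwo_of_gt (by norm_num)]
    ring
  rw [hdev]
  rcases le_or_gt x (1 / 4) with hx' | hx'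
  · rw [Uone, Vtwo_of_le hx', winRate_of_mid h₁ h₂]; nlinarith
  · rw [Uone_eq_of_mid hx' h₁ h₂, div_lt_div_iff₀ (by positivity) (by norm_num)]; nlinarith

lemma Uone_lt_Uone_quarter_of_mid {x y : ℝ} (hx : 1 / 4 < x) (hy : 1 / 5 ≤ y)
    (hy' : y ≤ 1 / 3) (h₁ : y * (1 - x) < x) (h₂ : x * (1 - y) ≤ y) :
    Uone x y < Uone (1 / 4) y := by
  have hdev : Uone (1 / 4) y = (1 + 3 * y) / 8 := by
    rw [Uone, winRate_of_mid (by linarith) (by linarith), Vtwo_of_le le_rfl]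
    ring
  rw [hdev, Uone_eq_of_mid hx h₁.le h₂, div_lt_div_iff₀ (by positivity) (by norm_num)]
  nlinarith [mul_nonneg (sub_nonneg.2 h₂) (sub_pos.2 hx).le,
    mul_nonneg (sub_pos.2 h₁).le (sub_nonneg.2 hy')]

lemma Uone_lt_Uone_div_one_add_self_of_mid {x y : ℝ} (hy : 1 / 3 < y)
    (h₁ : y * (1 - x) < x) (h₂ : x * (1 - y) ≤ y) : Uone x y < Uone (y / (1 + y)) y := by
  have hy₁ : 0 < 1 + y := by linarith
  have hx : 1 / 4 < x := by nlinarith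
  have hc : 1 / 4 < y / (1 + y) := (lt_div_iff₀ hy₁).2 (by linarith)
  have hdev : Uone (y / (1 + y)) y = (2 + 3 * y) / (9 * (1 + y)) := by
    rw [Uone, winRate_div_one_add_self (by linarith), Vtwo_of_gt hc]
    field_simp
    ring
  rw [hdev, Uone_eq_of_mid hx h₁.le h₂, div_lt_div_iff₀ (by positivity) (by positivity)]
  -- the gap factors as `(x (1 + y) - y) ((y - 1) x + 2 (1 + y))`, and `x (1 + y) > y` is `h₁`
  have hfac : 0 < (x * (1 + y) - y) * ((y - 1) * x + 2 * (1 + y)) := by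
    apply mul_pos <;> nlinarith
  nlinarith [hfac]

lemma hasBetterReply_or_of_mid {x y : ℝ} (h₁ : y * (1 - x) ≤ x) (h₂ : x * (1 - y) ≤ y) :
    HasBetterReply x y ∨ HasBetterReply y x := by
  wlog hyx : y ≤ x generalizing x y
  · exact (this h₂ h₁ (le_of_not_ge hyx)).symm
  left
  rcases le_or_gt y (1 / 4) with hy₄ | hy₄
  · exact ⟨1, ⟨zero_le_one, le_rfl⟩, Uone_lt_Uone_one_of_mid hy₄ h₁ h₂⟩
  have h₁' : y * (1 - x) < x := by nlinarith
  rcases le_or_gt y (1 / 3) with hy₃ | hy₃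
  · exact ⟨1 / 4, ⟨by norm_num, by norm_num⟩,
      Uone_lt_Uone_quarter_of_mid (by linarith) (by linarith) hy₃ h₁' h₂⟩
  · have hy₁ : 0 < 1 + y := by linarith
    exact ⟨y / (1 + y), ⟨by positivity, (div_le_one hy₁).2 (by linarith)⟩,
      Uone_lt_Uone_div_one_add_self_of_mid hy₃ h₁' h₂⟩

/-- Non-existence of pure Nash equilibria in the Threshold Game with
`q = 1/4` and `ε = 1/9`: for every profile `(p₁, p₂) ∈ [0,1]²`, some player has a
profitable deviation. -/
theorem threshold_game_no_pure_nash :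
    ∀ p₁ ∈ Set.Icc (0 : ℝ) 1, ∀ p₂ ∈ Set.Icc (0 : ℝ) 1,
      (∃ p₁' ∈ Set.Icc (0 : ℝ) 1, Uone p₁ p₂ < Uone p₁' p₂) ∨
      (∃ p₂' ∈ Set.Icc (0 : ℝ) 1, Utwo p₁ p₂ < Utwo p₁ p₂') := by
  intro p₁ hp₁ p₂ hp₂
  change HasBetterReply p₁ p₂ ∨ HasBetterReply p₂ p₁
  by_cases h₁ : p₁ < p₂ * (1 - p₁)
  · exact Or.inl (hasBetterReply_of_lt hp₂.1 h₁)
  by_cases h₂ : p₂ < p₁ * (1 - p₂)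
  · exact Or.inr (hasBetterReply_of_lt hp₁.1 h₂)
  exact hasBetterReply_or_of_mid (not_lt.1 h₁) (not_lt.1 h₂)
end

section
/- Let J ≥ 0 and C > 0 be constants and let (X_n)_{n≥1} be a process adapted to a filtration (F_n) with X_n ≥ 0 for all n, |X_{n+1} − X_n| ≤ C almost surely for all n, and E[X_{n+1} − X_n | F_n] ≤ 0 on the event {X_n > J} for all n. Then, almost surely, X_n ≤ J + √(6·C²·n·log n) for all sufficiently large n; in particular X_n = O(√(n·log n)) almost surely. -/
/-!
Fix `M` and put `W k = exp (l (X k - J)⁺)` on `{X 1 ≤ J + M}`, and `0` elsewhere. On `{X k > J}`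
the drift condition together with `exp x ≤ 1 + x + (11/18) x²` for `|x| ≤ 1/2` gives
`E[W (k+1)] ≤ (1 + (11/18) (lC)²) E[W k]`, while a step starting at or below `J` adds at most
`exp (lC)`; hence `E[W n] ≤ (1 + (11/18) (lC)²)ⁿ (exp (lM) + n exp (lC))`. Markov's inequality
with `l = 2 √(log n / n) / C` bounds the probability that `X n > J + √(6 C² n log n)` on
`{X 1 ≤ J + M}` by `O(n ^ (1 + 22/9 - 2√6)) = O(n ^ (-4/3))`, which is summable. Borel–Cantelli
and a union over `M ∈ ℕ` conclude.
-/

open MeasureTheory Filter Real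
open scoped ENNReal

-- `11/18 = 1/2 + (2/9)·(1/2)`: the cubic remainder `(2/9)|x|³` of `Real.exp_bound`, at `|x| ≤ 1/2`.
lemma exp_le_one_add_add_sq_of_abs_le_half {x : ℝ} (hx : |x| ≤ 1 / 2) :
    exp x ≤ 1 + x + 11 / 18 * x ^ 2 := by
  have h := abs_le.1 (Real.exp_bound (hx.trans (by norm_num)) (n := 3) (by norm_num))
  have hcube : |x| ^ 3 ≤ 1 / 2 * x ^ 2 := by
    rw [pow_succ, sq_abs]
    nlinarith [mul_le_mul_of_nonneg_left hx (sq_nonneg x)]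
  norm_num [Finset.sum_range_succ, Nat.factorial] at h
  nlinarith [h.2]

lemma le_add_mul_of_forall_sub_le {x : ℕ → ℝ} {C : ℝ} (h : ∀ n, 1 ≤ n → x (n + 1) - x n ≤ C)
    {k : ℕ} (hk : 1 ≤ k) : x k ≤ x 1 + C * (k - 1) := by
  induction k, hk using Nat.le_induction with
  | base => simp
  | succ k hk ih => push_cast; linarith [h k hk]

lemma le_pow_mul_of_le_mul_add {a : ℕ → ℝ} {g b : ℝ} (hg : 1 ≤ g) (hb : 0 ≤ b) (ha : 0 ≤ a 1)
    (h : ∀ k, 1 ≤ k → a (k + 1) ≤ g * a k + b) {n : ℕ} (hn : 1 ≤ n) :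
    a n ≤ g ^ n * (a 1 + n * b) := by
  induction n, hn using Nat.le_induction with
  | base => simp only [pow_one, Nat.cast_one, one_mul]; nlinarith
  | succ k hk ih =>
    have hb' : b ≤ g ^ (k + 1) * b := le_mul_of_one_le_left hb (one_le_pow₀ hg)
    calc a (k + 1) ≤ g * (g ^ k * (a 1 + k * b)) + b :=
          (h k hk).trans (by gcongr)
      _ = g ^ (k + 1) * (a 1 + k * b) + b := by ring
      _ ≤ g ^ (k + 1) * (a 1 + (k + 1 : ℕ) * b) := by push_cast; linarith

lemma rpow_mul_rpow_mul_add_le {x K₁ K₂ : ℝ} (hx : 1 ≤ x) (hK₁ : 0 ≤ K₁) (hK₂ : 0 ≤ K₂) :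
    x ^ (-(2 * √6)) * (x ^ (22 / 9 : ℝ) * (K₁ + x * K₂)) ≤ (K₁ + K₂) * x ^ (-(4 / 3) : ℝ) := by
  have hx0 : 0 < x := by linarith
  have hsqrt : 43 / 9 ≤ 2 * √6 := by
    have : 43 / 18 ≤ √6 := (le_sqrt (by norm_num) (by norm_num)).2 (by norm_num)
    linarith
  calc x ^ (-(2 * √6)) * (x ^ (22 / 9 : ℝ) * (K₁ + x * K₂))
      ≤ x ^ (-(2 * √6)) * (x ^ (22 / 9 : ℝ) * (x * (K₁ + K₂))) := by gcongr; nlinarith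
    _ = (K₁ + K₂) * x ^ (-(2 * √6) + 22 / 9 + 1) := by
        rw [rpow_add hx0, rpow_add hx0, rpow_one]; ring
    _ ≤ (K₁ + K₂) * x ^ (-(4 / 3) : ℝ) := by
        gcongr
        linarith

lemma sqrt_log_div_mul_sqrt {x C : ℝ} (hx : 1 ≤ x) (hC : 0 ≤ C) :
    √(log x / x) * √(6 * C ^ 2 * x * log x) = √6 * C * log x := by
  have hL := log_nonneg hx
  rw [← sqrt_mul (div_nonneg hL (by linarith)), show log x / x * (6 * C ^ 2 * x * log x) =
    (C * log x) ^ 2 * 6 by field_simp, sqrt_mul (sq_nonneg _), sqrt_sq (by positivity)]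
  ring

lemma one_add_mul_log_div_pow_le_rpow {c : ℝ} (hc : 0 ≤ c) {n : ℕ} (hn : 1 ≤ n) :
    (1 + c * log n / n) ^ n ≤ (n : ℝ) ^ c := by
  have hn0 : (0 : ℝ) < n := by exact_mod_cast hn
  have := log_nonneg (Nat.one_le_cast.2 hn : (1 : ℝ) ≤ n)
  calc (1 + c * log n / n) ^ n ≤ exp (c * log n / n) ^ n := by
        gcongr
        linarith [add_one_le_exp (c * log n / n)]
    _ = (n : ℝ) ^ c := by
        rw [← exp_nat_mul, rpow_def_of_pos hn0]
        congr 1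
        field_simp

lemma eventually_log_le_div : ∀ᶠ n : ℕ in atTop, log n ≤ n / 16 := by
  filter_upwards [tendsto_natCast_atTop_atTop.eventually
    (isLittleO_log_id_atTop.bound (c := 1 / 16) (by norm_num)), eventually_ge_atTop 1] with n hn h1
  have h1' : (1 : ℝ) ≤ n := by exact_mod_cast h1
  rw [id, Real.norm_of_nonneg (log_nonneg h1'), Real.norm_of_nonneg (by linarith)] at hn
  linarith

lemma tsum_measure_ne_top_of_eventually_le {α : Type*} {m : MeasurableSpace α} {μ : Measure α}
    [IsFiniteMeasure μ] {s : ℕ → Set α} {g : ℕ → ℝ} (hg : Summable g)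
    (h : ∀ᶠ n in atTop, μ.real (s n) ≤ g n) : ∑' n, μ (s n) ≠ ∞ := by
  have hs : Summable fun n => μ.real (s n) := hg.of_norm_bounded_eventually_nat <| by
    filter_upwards [h] with n hn
    rwa [Real.norm_of_nonneg measureReal_nonneg]
  have hμ (n : ℕ) : μ (s n) = ENNReal.ofReal (μ.real (s n)) := (ofReal_measureReal).symm
  simp_rw [hμ]
  rw [← ENNReal.ofReal_tsum_of_nonneg (fun _ => measureReal_nonneg) hs]
  exact ENNReal.ofReal_ne_top

section CondExp

variable {Ω : Type*} {m m0 : MeasurableSpace Ω} {μ : Measure Ω}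

lemma integral_mul_nonpos_of_mul_condExp_nonpos [IsFiniteMeasure μ] (hm : m ≤ m0) {Y D : Ω → ℝ}
    (hY : StronglyMeasurable[m] Y) (hD : Integrable D μ) (hYD : Integrable (Y * D) μ)
    (h : ∀ᵐ ω ∂μ, Y ω * μ[D | m] ω ≤ 0) : ∫ ω, Y ω * D ω ∂μ ≤ 0 :=
  calc ∫ ω, Y ω * D ω ∂μ = ∫ ω, μ[Y * D | m] ω ∂μ := (integral_condExp hm).symm
    _ = ∫ ω, Y ω * μ[D | m] ω ∂μ :=
        integral_congr_ae (condExp_mul_of_stronglyMeasurable_left hY hYD hD)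
    _ ≤ 0 := integral_nonpos_of_ae h

lemma integrable_mul_exp_of_abs_le {Y D : Ω → ℝ} {C l : ℝ} (hYi : Integrable Y μ)
    (hD : AEStronglyMeasurable D μ) (hDC : ∀ᵐ ω ∂μ, |D ω| ≤ C) (hl : 0 ≤ l) :
    Integrable (fun ω => Y ω * exp (l * D ω)) μ := by
  refine hYi.mul_bdd (c := exp (l * C))
    (continuous_exp.comp_aestronglyMeasurable (hD.const_mul l)) ?_
  filter_upwards [hDC] with ω hω
  rw [Real.norm_of_nonneg (exp_pos _).le]
  gcongr
  exact (le_abs_self _).trans hω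

lemma integral_mul_exp_le [IsFiniteMeasure μ] (hm : m ≤ m0) {Y D : Ω → ℝ} {C l : ℝ}
    (hY : StronglyMeasurable[m] Y) (hY0 : 0 ≤ Y) (hYi : Integrable Y μ)
    (hD : AEStronglyMeasurable D μ) (hDC : ∀ᵐ ω ∂μ, |D ω| ≤ C)
    (hdrift : ∀ᵐ ω ∂μ, Y ω * μ[D | m] ω ≤ 0) (hl : 0 ≤ l) (hlC : l * C ≤ 1 / 2) :
    ∫ ω, Y ω * exp (l * D ω) ∂μ ≤ (1 + 11 / 18 * (l * C) ^ 2) * ∫ ω, Y ω ∂μ := by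
  have hDC' : ∀ᵐ ω ∂μ, ‖D ω‖ ≤ C := by simpa only [Real.norm_eq_abs] using hDC
  have hYD : Integrable (fun ω => Y ω * D ω) μ := hYi.mul_bdd hD hDC'
  have hpointwise : ∀ᵐ ω ∂μ, Y ω * exp (l * D ω) ≤
      (1 + 11 / 18 * (l * C) ^ 2) * Y ω + l * (Y ω * D ω) := by
    filter_upwards [hDC] with ω hω
    have hlD : |l * D ω| ≤ l * C := by
      rw [abs_mul, abs_of_nonneg hl]; exact mul_le_mul_of_nonneg_left hω hl
    have hsq : (l * D ω) ^ 2 ≤ (l * C) ^ 2 := sq_le_sq' (abs_le.1 hlD).1 (abs_le.1 hlD).2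
    calc Y ω * exp (l * D ω) ≤ Y ω * (1 + l * D ω + 11 / 18 * (l * D ω) ^ 2) :=
          mul_le_mul_of_nonneg_left
            (exp_le_one_add_add_sq_of_abs_le_half (hlD.trans hlC)) (hY0 ω)
      _ ≤ (1 + 11 / 18 * (l * C) ^ 2) * Y ω + l * (Y ω * D ω) := by
          nlinarith [mul_le_mul_of_nonneg_left hsq (hY0 ω)]
  calc ∫ ω, Y ω * exp (l * D ω) ∂μ
      ≤ ∫ ω, ((1 + 11 / 18 * (l * C) ^ 2) * Y ω + l * (Y ω * D ω)) ∂μ :=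
        integral_mono_ae (integrable_mul_exp_of_abs_le hYi hD hDC hl)
          ((hYi.const_mul _).add (hYD.const_mul l)) hpointwise
    _ = (1 + 11 / 18 * (l * C) ^ 2) * ∫ ω, Y ω ∂μ + l * ∫ ω, Y ω * D ω ∂μ := by
        rw [integral_add (hYi.const_mul _) (hYD.const_mul l), integral_const_mul,
          integral_const_mul]
    _ ≤ (1 + 11 / 18 * (l * C) ^ 2) * ∫ ω, Y ω ∂μ := by
        have := integral_mul_nonpos_of_mul_condExp_nonpos hm hY
          ((integrable_const C).mono' hD hDC') hYD hdrift
        nlinarith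

end CondExp

section TruncatedExponential

variable {Ω : Type*} {m0 : MeasurableSpace Ω} {μ : Measure Ω} {X : ℕ → Ω → ℝ} {J C M l : ℝ}

-- The cutoff to `{X 1 ≤ J + M}` makes it integrable: `X 1` itself need not be.
noncomputable def truncExpExcess (X : ℕ → Ω → ℝ) (J M l : ℝ) (k : ℕ) : Ω → ℝ :=
  {ω | X 1 ω ≤ J + M}.indicator fun ω => exp (l * max (X k ω - J) 0)

lemma truncExpExcess_nonneg (k : ℕ) : 0 ≤ truncExpExcess X J M l k :=
  Set.indicator_nonneg fun _ _ => (exp_pos _).le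

lemma measurable_truncExpExcess (hX : ∀ n, Measurable (X n)) (k : ℕ) :
    Measurable (truncExpExcess X J M l k) :=
  (by fun_prop : Measurable fun ω => exp (l * max (X k ω - J) 0)).indicator
    (measurableSet_le (hX 1) measurable_const)

lemma ae_le_add_mul_of_abs_sub_le (hbdd : ∀ n, 1 ≤ n → ∀ᵐ ω ∂μ, |X (n + 1) ω - X n ω| ≤ C) :
    ∀ᵐ ω ∂μ, ∀ k, 1 ≤ k → X k ω ≤ X 1 ω + C * (k - 1) := by
  have h : ∀ᵐ ω ∂μ, ∀ n, 1 ≤ n → |X (n + 1) ω - X n ω| ≤ C :=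
    ae_all_iff.2 fun n => eventually_imp_distrib_left.2 (hbdd n)
  filter_upwards [h] with ω hω k hk
  exact le_add_mul_of_forall_sub_le (x := (X · ω)) (fun n hn => (abs_le.1 (hω n hn)).2) hk

lemma integrable_truncExpExcess [IsFiniteMeasure μ] (hX : ∀ n, Measurable (X n))
    (hbdd : ∀ n, 1 ≤ n → ∀ᵐ ω ∂μ, |X (n + 1) ω - X n ω| ≤ C) (hl : 0 ≤ l) {k : ℕ}
    (hk : 1 ≤ k) : Integrable (truncExpExcess X J M l k) μ := by
  refine (integrable_const (exp (l * max (M + C * (k - 1)) 0))).mono'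
    (measurable_truncExpExcess hX k).aestronglyMeasurable ?_
  filter_upwards [ae_le_add_mul_of_abs_sub_le hbdd] with ω hω
  rw [Real.norm_of_nonneg (truncExpExcess_nonneg k ω), truncExpExcess, Set.indicator_apply]
  split_ifs with hA
  · gcongr
    linarith [hω k hk, show X 1 ω ≤ J + M from hA]
  · positivity

noncomputable def truncExpExcessAbove (X : ℕ → Ω → ℝ) (J M l : ℝ) (k : ℕ) : Ω → ℝ :=
  ({ω | X 1 ω ≤ J + M} ∩ {ω | J < X k ω}).indicator fun ω => exp (l * (X k ω - J))

lemma truncExpExcessAbove_nonneg (k : ℕ) : 0 ≤ truncExpExcessAbove X J M l k :=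
  Set.indicator_nonneg fun _ _ => (exp_pos _).le

lemma stronglyMeasurable_truncExpExcessAbove {F : Filtration ℕ m0} (hadapt : Adapted F X)
    {k : ℕ} (hk : 1 ≤ k) : StronglyMeasurable[F k] (truncExpExcessAbove X J M l k) :=
  ((continuous_exp.measurable.comp (((hadapt k).sub measurable_const).const_mul l)).indicator
    ((measurableSet_le ((hadapt 1).mono (F.mono hk) le_rfl) measurable_const).inter
      (measurableSet_lt measurable_const (hadapt k)))).stronglyMeasurable

lemma truncExpExcessAbove_le (hl : 0 ≤ l) (k : ℕ) :
    truncExpExcessAbove X J M l k ≤ truncExpExcess X J M l k := by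
  intro ω
  simp only [truncExpExcessAbove, truncExpExcess, Set.indicator_apply, Set.mem_inter_iff]
  split_ifs with hB hA
  · gcongr
    exact le_max_left _ _
  · exact absurd hB.1 hA
  · positivity
  · rfl

lemma truncExpExcess_succ_le (hl : 0 ≤ l) {k : ℕ} {ω : Ω}
    (hω : |X (k + 1) ω - X k ω| ≤ C) :
    truncExpExcess X J M l (k + 1) ω ≤
      truncExpExcessAbove X J M l k ω * exp (l * (X (k + 1) ω - X k ω)) + exp (l * C) := by
  have hC : 0 ≤ C := (abs_nonneg _).trans hω
  simp only [truncExpExcessAbove, truncExpExcess, Set.indicator_apply, Set.mem_inter_iff]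
  split_ifs with hA hJ hJ
  · rw [← exp_add, ← mul_add, sub_add_sub_cancel']
    rcases le_total (X (k + 1) ω - J) 0 with hle | hle
    · rw [max_eq_right hle, mul_zero, exp_zero]
      linarith [one_le_exp (mul_nonneg hl hC), exp_pos (l * (X (k + 1) ω - J))]
    · rw [max_eq_left hle]
      linarith [exp_pos (l * C)]
  · have : exp (l * max (X (k + 1) ω - J) 0) ≤ exp (l * C) := by
      gcongr
      exact max_le (by linarith [(abs_le.1 hω).2, not_lt.1 fun h : J < X k ω => hJ ⟨hA, h⟩]) hC
    linarith
  · exact absurd hJ.1 hA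
  · positivity

lemma integral_truncExpExcess_succ_le [IsProbabilityMeasure μ] {F : Filtration ℕ m0}
    (hadapt : Adapted F X) (hbdd : ∀ n, 1 ≤ n → ∀ᵐ ω ∂μ, |X (n + 1) ω - X n ω| ≤ C)
    (hdrift : ∀ n : ℕ, 1 ≤ n → ∀ᵐ ω ∂μ,
      J < X n ω → (μ[(fun ω' => X (n + 1) ω' - X n ω') | F n]) ω ≤ 0)
    (hl : 0 ≤ l) (hlC : l * C ≤ 1 / 2) {k : ℕ} (hk : 1 ≤ k) :
    ∫ ω, truncExpExcess X J M l (k + 1) ω ∂μ ≤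
      (1 + 11 / 18 * (l * C) ^ 2) * ∫ ω, truncExpExcess X J M l k ω ∂μ + exp (l * C) := by
  have hX n : Measurable (X n) := (hadapt n).mono (F.le n) le_rfl
  set Y := truncExpExcessAbove X J M l k
  have hY := stronglyMeasurable_truncExpExcessAbove (J := J) (M := M) (l := l) hadapt hk
  have hYi : Integrable Y μ :=
    (integrable_truncExpExcess hX hbdd hl hk).mono' (hY.mono (F.le k)).aestronglyMeasurable
      (ae_of_all _ fun ω => by
        rw [Real.norm_of_nonneg (truncExpExcessAbove_nonneg k ω)]
        exact truncExpExcessAbove_le hl k ω)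
  have hYdrift : ∀ᵐ ω ∂μ, Y ω * (μ[(fun ω' => X (k + 1) ω' - X k ω') | F k]) ω ≤ 0 := by
    filter_upwards [hdrift k hk] with ω hω
    simp only [Y, truncExpExcessAbove, Set.indicator_apply, Set.mem_inter_iff]
    split_ifs with hB
    · exact mul_nonpos_of_nonneg_of_nonpos (exp_pos _).le (hω hB.2)
    · rw [zero_mul]
  have hΔ : AEStronglyMeasurable (fun ω => X (k + 1) ω - X k ω) μ :=
    ((hX (k + 1)).sub (hX k)).aestronglyMeasurable
  have hYexp := integrable_mul_exp_of_abs_le hYi hΔ (hbdd k hk) hl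
  calc ∫ ω, truncExpExcess X J M l (k + 1) ω ∂μ
      ≤ ∫ ω, (Y ω * exp (l * (X (k + 1) ω - X k ω)) + exp (l * C)) ∂μ :=
        integral_mono_ae (integrable_truncExpExcess hX hbdd hl (by omega))
          (hYexp.add (integrable_const _))
          (by filter_upwards [hbdd k hk] with ω hω using truncExpExcess_succ_le hl hω)
    _ = ∫ ω, Y ω * exp (l * (X (k + 1) ω - X k ω)) ∂μ + exp (l * C) := by
        rw [integral_add hYexp (integrable_const _), integral_const, probReal_univ, one_smul]
    _ ≤ (1 + 11 / 18 * (l * C) ^ 2) * ∫ ω, Y ω ∂μ + exp (l * C) := by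
        gcongr
        exact integral_mul_exp_le (F.le k) hY (truncExpExcessAbove_nonneg k) hYi hΔ (hbdd k hk)
          hYdrift hl hlC
    _ ≤ (1 + 11 / 18 * (l * C) ^ 2) * ∫ ω, truncExpExcess X J M l k ω ∂μ + exp (l * C) := by
        have := integral_mono hYi (integrable_truncExpExcess hX hbdd hl hk)
          (truncExpExcessAbove_le hl k)
        gcongr

lemma integral_truncExpExcess_le [IsProbabilityMeasure μ] {F : Filtration ℕ m0}
    (hadapt : Adapted F X) (hbdd : ∀ n, 1 ≤ n → ∀ᵐ ω ∂μ, |X (n + 1) ω - X n ω| ≤ C)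
    (hdrift : ∀ n : ℕ, 1 ≤ n → ∀ᵐ ω ∂μ,
      J < X n ω → (μ[(fun ω' => X (n + 1) ω' - X n ω') | F n]) ω ≤ 0)
    (hM : 0 ≤ M) (hl : 0 ≤ l) (hlC : l * C ≤ 1 / 2) {n : ℕ} (hn : 1 ≤ n) :
    ∫ ω, truncExpExcess X J M l n ω ∂μ ≤
      (1 + 11 / 18 * (l * C) ^ 2) ^ n * (exp (l * M) + n * exp (l * C)) := by
  have hX n : Measurable (X n) := (hadapt n).mono (F.le n) le_rfl
  have hW₁ : ∫ ω, truncExpExcess X J M l 1 ω ∂μ ≤ exp (l * M) := by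
    calc ∫ ω, truncExpExcess X J M l 1 ω ∂μ ≤ ∫ _, exp (l * M) ∂μ := by
          refine integral_mono (integrable_truncExpExcess hX hbdd hl le_rfl)
            (integrable_const _) fun ω => ?_
          rw [truncExpExcess, Set.indicator_apply]
          split_ifs with hA
          · gcongr
            exact max_le (by linarith [show X 1 ω ≤ J + M from hA]) hM
          · positivity
      _ = exp (l * M) := by simp
  refine (le_pow_mul_of_le_mul_add (a := fun k => ∫ ω, truncExpExcess X J M l k ω ∂μ)
    (le_add_of_nonneg_right (by positivity)) (exp_pos _).le
    (integral_nonneg (truncExpExcess_nonneg 1))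
    (fun k hk => integral_truncExpExcess_succ_le hadapt hbdd hdrift hl hlC hk) hn).trans ?_
  gcongr

lemma exp_mul_measureReal_le_integral_truncExpExcess [IsFiniteMeasure μ]
    (hX : ∀ n, Measurable (X n)) (hbdd : ∀ n, 1 ≤ n → ∀ᵐ ω ∂μ, |X (n + 1) ω - X n ω| ≤ C)
    (hl : 0 ≤ l) (a : ℝ) {n : ℕ} (hn : 1 ≤ n) :
    exp (l * a) * μ.real {ω | X 1 ω ≤ J + M ∧ J + a < X n ω} ≤
      ∫ ω, truncExpExcess X J M l n ω ∂μ := by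
  refine le_trans ?_ (mul_meas_ge_le_integral_of_nonneg (ae_of_all _ (truncExpExcess_nonneg n))
    (integrable_truncExpExcess hX hbdd hl hn) (exp (l * a)))
  refine mul_le_mul_of_nonneg_left (measureReal_mono ?_) (exp_pos _).le
  rintro ω ⟨hA, ha⟩
  change exp (l * a) ≤ truncExpExcess X J M l n ω
  rw [truncExpExcess, Set.indicator_of_mem (show ω ∈ {ω | X 1 ω ≤ J + M} from hA)]
  gcongr
  exact le_max_of_le_left (by linarith)

lemma measureReal_le_exp_neg_mul [IsProbabilityMeasure μ] {F : Filtration ℕ m0}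
    (hadapt : Adapted F X) (hbdd : ∀ n, 1 ≤ n → ∀ᵐ ω ∂μ, |X (n + 1) ω - X n ω| ≤ C)
    (hdrift : ∀ n : ℕ, 1 ≤ n → ∀ᵐ ω ∂μ,
      J < X n ω → (μ[(fun ω' => X (n + 1) ω' - X n ω') | F n]) ω ≤ 0)
    (hM : 0 ≤ M) (hl : 0 ≤ l) (hlC : l * C ≤ 1 / 2) (a : ℝ) {n : ℕ} (hn : 1 ≤ n) :
    μ.real {ω | X 1 ω ≤ J + M ∧ J + a < X n ω} ≤
      exp (-(l * a)) * ((1 + 11 / 18 * (l * C) ^ 2) ^ n * (exp (l * M) + n * exp (l * C))) := by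
  rw [exp_neg, ← div_eq_inv_mul, le_div_iff₀ (exp_pos _), mul_comm]
  exact (exp_mul_measureReal_le_integral_truncExpExcess
    (fun n => (hadapt n).mono (F.le n) le_rfl) hbdd hl a hn).trans
    (integral_truncExpExcess_le hadapt hbdd hdrift hM hl hlC hn)

lemma eventually_measureReal_le_rpow [IsProbabilityMeasure μ] {F : Filtration ℕ m0}
    (hadapt : Adapted F X) (hbdd : ∀ n, 1 ≤ n → ∀ᵐ ω ∂μ, |X (n + 1) ω - X n ω| ≤ C)
    (hdrift : ∀ n : ℕ, 1 ≤ n → ∀ᵐ ω ∂μ,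
      J < X n ω → (μ[(fun ω' => X (n + 1) ω' - X n ω') | F n]) ω ≤ 0)
    (hC : 0 < C) (hM : 0 ≤ M) :
    ∀ᶠ n : ℕ in atTop, μ.real {ω | X 1 ω ≤ J + M ∧ J + √(6 * C ^ 2 * n * log n) < X n ω} ≤
      (exp (M / (2 * C)) + exp (1 / 2)) * (n : ℝ) ^ (-(4 / 3) : ℝ) := by
  filter_upwards [eventually_log_le_div, eventually_ge_atTop 1] with n hlog hn
  have hn' : (1 : ℝ) ≤ n := by exact_mod_cast hn
  have hn0 : (0 : ℝ) < n := by linarith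
  set s := √(log n / n)
  have hs2 : s ^ 2 = log n / n := sq_sqrt (div_nonneg (log_nonneg hn') hn0.le)
  have hs : s ≤ 1 / 4 := (sqrt_le_left (by norm_num)).2 (by rw [div_le_iff₀ hn0]; linarith)
  set l := 2 * s / C
  have hlC : l * C = 2 * s := div_mul_cancel₀ _ hC.ne'
  have hl : 0 ≤ l := by positivity
  have hla : exp (-(l * √(6 * C ^ 2 * n * log n))) = (n : ℝ) ^ (-(2 * √6)) := by
    rw [rpow_def_of_pos hn0, show l * √(6 * C ^ 2 * n * log n) =
      2 * (s * √(6 * C ^ 2 * n * log n)) / C by ring, sqrt_log_div_mul_sqrt hn' hC.le]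
    field_simp
  have hg : (1 + 11 / 18 * (l * C) ^ 2) ^ n ≤ (n : ℝ) ^ (22 / 9 : ℝ) := by
    rw [hlC, mul_pow, hs2, show 11 / 18 * (2 ^ 2 * (log n / n)) = 22 / 9 * log n / n by ring]
    exact one_add_mul_log_div_pow_le_rpow (by norm_num) hn
  have hlM : exp (l * M) ≤ exp (M / (2 * C)) := by
    gcongr
    rw [le_div_iff₀ (by positivity)]
    nlinarith
  have hlC' : exp (l * C) ≤ exp (1 / 2) := by gcongr; linarith
  calc μ.real {ω | X 1 ω ≤ J + M ∧ J + √(6 * C ^ 2 * n * log n) < X n ω}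
      ≤ exp (-(l * √(6 * C ^ 2 * n * log n))) *
          ((1 + 11 / 18 * (l * C) ^ 2) ^ n * (exp (l * M) + n * exp (l * C))) :=
        measureReal_le_exp_neg_mul hadapt hbdd hdrift hM hl (by linarith) _ hn
    _ ≤ (n : ℝ) ^ (-(2 * √6)) * ((n : ℝ) ^ (22 / 9 : ℝ) *
          (exp (M / (2 * C)) + n * exp (1 / 2))) := by
        rw [hla]
        gcongr
    _ ≤ (exp (M / (2 * C)) + exp (1 / 2)) * (n : ℝ) ^ (-(4 / 3) : ℝ) :=
        rpow_mul_rpow_mul_add_le hn' (by positivity) (by positivity)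

end TruncatedExponential

theorem nonneg_drift_process_sqrt_log_bound_general
    {Ω : Type*} {m0 : MeasurableSpace Ω} (μ : Measure Ω) [IsProbabilityMeasure μ]
    (F : Filtration ℕ m0) (X : ℕ → Ω → ℝ) (hadapt : Adapted F X)
    (J C : ℝ) (hC : 0 < C)
    (hbdd : ∀ n : ℕ, 1 ≤ n → ∀ᵐ ω ∂μ, |X (n + 1) ω - X n ω| ≤ C)
    (hdrift : ∀ n : ℕ, 1 ≤ n → ∀ᵐ ω ∂μ,
      J < X n ω → (μ[(fun ω' => X (n + 1) ω' - X n ω') | F n]) ω ≤ 0) :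
    ∀ᵐ ω ∂μ, ∀ᶠ n : ℕ in atTop,
      X n ω ≤ J + Real.sqrt (6 * C ^ 2 * n * Real.log n) := by
  have hM (M : ℕ) : ∀ᵐ ω ∂μ, ∀ᶠ n : ℕ in atTop,
      ω ∉ {ω | X 1 ω ≤ J + M ∧ J + √(6 * C ^ 2 * n * log n) < X n ω} :=
    ae_eventually_notMem <| tsum_measure_ne_top_of_eventually_le
      ((summable_nat_rpow.2 (by norm_num)).mul_left _)
      (eventually_measureReal_le_rpow hadapt hbdd hdrift hC M.cast_nonneg)
  filter_upwards [ae_all_iff.2 hM] with ω hω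
  filter_upwards [hω ⌈X 1 ω - J⌉₊] with n hn
  by_contra! h
  exact hn ⟨by linarith [Nat.le_ceil (X 1 ω - J)], h⟩

/-- Almost-sure version of the Pemantle–Rosenthal moment bound: if a
nonnegative adapted process has bounded increments and nonpositive conditional drift above
the level `J`, then almost surely `X n ≤ J + √(6·C²·n·log n)` for all sufficiently large
`n`; in particular `X n = O(√(n·log n))` almost surely. -/
theorem nonneg_drift_process_sqrt_log_bound
    {Ω : Type*} {m0 : MeasurableSpace Ω} (μ : Measure Ω) [IsProbabilityMeasure μ]
    (F : Filtration ℕ m0) (X : ℕ → Ω → ℝ) (hadapt : Adapted F X)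
    (J C : ℝ) (hJ : 0 ≤ J) (hC : 0 < C)
    (hnonneg : ∀ᵐ ω ∂μ, ∀ n : ℕ, 1 ≤ n → 0 ≤ X n ω)
    (hbdd : ∀ n : ℕ, 1 ≤ n → ∀ᵐ ω ∂μ, |X (n + 1) ω - X n ω| ≤ C)
    (hdrift : ∀ n : ℕ, 1 ≤ n → ∀ᵐ ω ∂μ,
      J < X n ω → (μ[(fun ω' => X (n + 1) ω' - X n ω') | F n]) ω ≤ 0) :
    ∀ᵐ ω ∂μ, ∀ᶠ n : ℕ in atTop,
      X n ω ≤ J + Real.sqrt (6 * C ^ 2 * n * Real.log n) :=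
  nonneg_drift_process_sqrt_log_bound_general μ F X hadapt J C hC hbdd hdrift
end

section
/- Let ε > 0 and J, C > 0 be constants and let (X_n)_{n≥1} be a real-valued process adapted to a filtration (F_n) with X_1 ≥ 0, |X_{n+1} − X_n| ≤ C almost surely for all n, and E[X_{n+1} − X_n | F_n] ≥ ε on the event {X_n < J·n} for all n. Then, almost surely, X_n ≥ min{J, ε}·n − √(5·C²·n·log n) for all sufficiently large n; in particular, almost surely liminf_{n→∞} X_n/n ≥ min{J, ε} > 0. -/
/-!
Let `a = min J ε` and let `D k = E[X (k + 1) - X k | F k]` be the drift. Then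
`X n - X s = ∑_{s ≤ k < n} D k + M s n`, where `M s n` is a sum of martingale differences bounded
by `2C` with conditional variance at most `C²`. Let `s ≤ n` start the final stretch that the path
spends below the line `k ↦ J k` before time `n`. On that stretch `D ≥ ε`, and `X s ≥ a (s - 1) - C`,
so `X n ≥ a n - (a + C) + M s n`. A Bernstein-type Chernoff bound with tilt `√(5 log n / n) / C`
makes `M s n ≤ a + C - √(5 C² n log n)` have probability `O(n^(-9/4))`; a union bound over the
`n` possible values of `s` and Borel–Cantelli give the first claim, and `√(n log n) / n → 0` the
second.
-/

open MeasureTheory Filter Real ProbabilityTheory Finset Topology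

namespace PositiveDrift

lemma exp_sub_one_sub_le_sq_div_two_mul_exp {a : ℝ} (ha : 0 ≤ a) :
    exp a - 1 - a ≤ a ^ 2 / 2 * exp a := by
  -- Multiplied by `e⁻ᵃ`, the claim reads `1 ≤ (1 + a) e⁻ᵃ + a² / 2`.
  have hmono : MonotoneOn (fun a => (1 + a) * exp (-a) + a ^ 2 / 2) (Set.Ici 0) := by
    refine monotoneOn_of_hasDerivWithinAt_nonneg (convex_Ici 0) (by fun_prop)
      (f' := fun a => a * (1 - exp (-a))) (fun x _ => ?_) (fun x hx => ?_)
    · have : HasDerivAt (fun a => (1 + a) * exp (-a) + a ^ 2 / 2) (x * (1 - exp (-x))) x :=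
        ((((hasDerivAt_id x).const_add 1).mul (hasDerivAt_neg x).exp).add
          ((hasDerivAt_pow 2 x).div_const 2)).congr_deriv (by simp; ring)
      exact this.hasDerivWithinAt
    · rw [interior_Ici] at hx
      exact mul_nonneg hx.out.le (sub_nonneg.2 (exp_le_one_iff.2 (by linarith [hx.out])))
  have h := hmono Set.self_mem_Ici (Set.mem_Ici.2 ha) ha
  simp only [neg_zero, exp_zero] at h
  have he : exp a * exp (-a) = 1 := by rw [← exp_add, add_neg_cancel, exp_zero]
  nlinarith [exp_pos a]

lemma exp_le_one_add_add_sq_div_two_mul_exp_abs (u : ℝ) :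
    exp u ≤ 1 + u + u ^ 2 / 2 * exp |u| := by
  have h := Complex.norm_exp_sub_sum_le_exp_norm_sub_sum (u : ℂ) 2
  simp only [sum_range_succ, sum_range_zero, Complex.norm_real, norm_eq_abs] at h
  norm_num at h
  rw [← Complex.ofReal_exp, ← Complex.ofReal_one, ← Complex.ofReal_add, ← Complex.ofReal_sub,
    Complex.norm_real, norm_eq_abs] at h
  have := exp_sub_one_sub_le_sq_div_two_mul_exp (abs_nonneg u)
  rw [sq_abs] at this
  linarith [le_abs_self (exp u - (1 + u))]

lemma abs_exp_mul_le {t x b : ℝ} (h : |x| ≤ b) : |exp (t * x)| ≤ exp (|t| * b) := by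
  rw [abs_exp, exp_le_exp]
  exact (le_abs_self _).trans (by rw [abs_mul]; gcongr)

section Deterministic

variable {x : ℕ → ℝ} {a J C : ℝ}

lemma exists_final_stretch_below_line (haJ : a ≤ J) (hx1 : -C ≤ x 1)
    (hstep : ∀ k, 1 ≤ k → x k - C ≤ x (k + 1)) {n : ℕ} (hn : 1 ≤ n) :
    ∃ s ∈ Icc 1 n, a * (s - 1) - C ≤ x s ∧ ∀ k ∈ Ico s n, x k < J * k := by
  induction n, hn using Nat.le_induction with
  | base => exact ⟨1, by simp, by simpa using hx1, by simp⟩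
  | succ n hn ih =>
    by_cases hxn : x n < J * n
    · obtain ⟨s, hs, hxs, hbelow⟩ := ih
      refine ⟨s, Icc_subset_Icc_right n.le_succ hs, hxs, fun k hk => ?_⟩
      obtain ⟨hsk, hkn⟩ := mem_Ico.1 hk
      rcases Nat.lt_succ_iff_lt_or_eq.1 hkn with hkn | rfl
      · exact hbelow k (mem_Ico.2 ⟨hsk, hkn⟩)
      · exact hxn
    · refine ⟨n + 1, by simp, ?_, by simp⟩
      have : a * n ≤ J * n := mul_le_mul_of_nonneg_right haJ n.cast_nonneg
      push_cast
      linarith [hstep n hn]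

lemma le_of_drift_below_line {D : ℕ → ℝ} {ε t : ℝ} (haJ : a ≤ J) (haε : a ≤ ε)
    (hx1 : -C ≤ x 1) (hstep : ∀ k, 1 ≤ k → x k - C ≤ x (k + 1))
    (hdrift : ∀ k, 1 ≤ k → x k < J * k → ε ≤ D k) {n : ℕ} (hn : 1 ≤ n)
    (hfluct : ∀ s ∈ Icc 1 n, x s + ∑ k ∈ Ico s n, D k - t ≤ x n) :
    a * n - (a + C + t) ≤ x n := by
  obtain ⟨s, hs, hxs, hbelow⟩ := exists_final_stretch_below_line haJ hx1 hstep hn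
  obtain ⟨hs1, hsn⟩ := mem_Icc.1 hs
  have hsum : (n - s : ℕ) * ε ≤ ∑ k ∈ Ico s n, D k := by
    simpa [nsmul_eq_mul] using card_nsmul_le_sum _ D ε fun k hk =>
      hdrift k (hs1.trans (mem_Ico.1 hk).1) (hbelow k hk)
  rw [Nat.cast_sub hsn] at hsum
  have : a * (n - s) ≤ ε * (n - s) := mul_le_mul_of_nonneg_right haε (by
    rw [sub_nonneg]; exact_mod_cast hsn)
  linarith [hfluct s hs]

lemma div_le_abs_add_of_abs_sub_le (hC : 0 ≤ C) (hstep : ∀ k, 1 ≤ k → |x (k + 1) - x k| ≤ C)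
    {n : ℕ} (hn : 1 ≤ n) : x n / n ≤ |x 1| + C := by
  have hgrowth : x n ≤ x 1 + C * (n - 1) := by
    induction n, hn using Nat.le_induction with
    | base => simp
    | succ n hn ih => push_cast; linarith [(abs_le.1 (hstep n hn)).2]
  have hn' : (1 : ℝ) ≤ n := by exact_mod_cast hn
  rw [div_le_iff₀ (by linarith)]
  nlinarith [le_abs_self (x 1), abs_nonneg (x 1)]

lemma le_liminf_div_of_le {r : ℕ → ℝ} {B : ℝ} (hr : Tendsto (fun n => r n / n) atTop (𝓝 0))
    (hlow : ∀ᶠ n in atTop, a * n - r n ≤ x n) (hup : ∀ᶠ n in atTop, x n / n ≤ B) :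
    a ≤ liminf (fun n => x n / n) atTop := by
  have hlim : Tendsto (fun n : ℕ => a - r n / n) atTop (𝓝 a) := by
    simpa using tendsto_const_nhds.sub hr
  have hle : ∀ᶠ n : ℕ in atTop, a - r n / n ≤ x n / n := by
    filter_upwards [hlow, eventually_ge_atTop 1] with n h hn
    have hn' : (0 : ℝ) < n := by exact_mod_cast hn
    rw [← mul_div_cancel_right₀ a hn'.ne', ← sub_div]
    exact div_le_div_of_nonneg_right h hn'.le
  calc a = liminf (fun n : ℕ => a - r n / n) atTop := hlim.liminf_eq.symm
    _ ≤ _ := liminf_le_liminf hle hlim.isBoundedUnder_ge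
      (isCoboundedUnder_ge_of_eventually_le _ hup)

end Deterministic

section Conditional

variable {Ω : Type*} {m m0 : MeasurableSpace Ω} {μ : Measure Ω}

lemma abs_sub_condExp_le {d : Ω → ℝ} {C : ℝ} (hdC : ∀ᵐ ω ∂μ, |d ω| ≤ C) :
    ∀ᵐ ω ∂μ, |(d - μ[d | m]) ω| ≤ 2 * C := by
  filter_upwards [hdC, ae_bdd_abs_condExp_of_ae_bdd_abs (m := m) hdC] with ω h1 h2
  exact (abs_sub _ _).trans (by linarith)

variable [IsFiniteMeasure μ]

lemma condExp_exp_mul_le (hm : m ≤ m0) {ξ : Ω → ℝ} {b v : ℝ}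
    (hξ : AEStronglyMeasurable ξ μ) (hb : ∀ᵐ ω ∂μ, |ξ ω| ≤ b)
    (hmean : μ[ξ | m] =ᵐ[μ] 0) (hvar : μ[ξ ^ 2 | m] ≤ᵐ[μ] fun _ => v) (t : ℝ) :
    μ[fun ω => exp (t * ξ ω) | m] ≤ᵐ[μ] fun _ => exp (t ^ 2 * exp (|t| * b) / 2 * v) := by
  set κ := t ^ 2 * exp (|t| * b) / 2
  have hξi : Integrable ξ μ := .of_bound hξ b (by simpa using hb)
  have hξ2i : Integrable (ξ ^ 2) μ := .of_bound (hξ.pow 2) (b ^ 2)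
    (hb.mono fun ω h => by simpa using pow_le_pow_left₀ (abs_nonneg _) h 2)
  have hexpi : Integrable (fun ω => exp (t * ξ ω)) μ :=
    .of_bound (continuous_exp.comp_aestronglyMeasurable (hξ.const_mul t)) (exp (|t| * b))
      (hb.mono fun ω h => abs_exp_mul_le h)
  have hquad : (fun ω => exp (t * ξ ω)) ≤ᵐ[μ] (fun _ => 1) + t • ξ + κ • ξ ^ 2 := by
    filter_upwards [hb] with ω h
    calc exp (t * ξ ω) ≤ 1 + t * ξ ω + (t * ξ ω) ^ 2 / 2 * exp |t * ξ ω| :=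
          exp_le_one_add_add_sq_div_two_mul_exp_abs _
      _ ≤ 1 + t * ξ ω + (t * ξ ω) ^ 2 / 2 * exp (|t| * b) := by rw [abs_mul]; gcongr
      _ = 1 + t * ξ ω + κ * ξ ω ^ 2 := by ring
  have hlin : μ[(fun _ => 1) + t • ξ + κ • ξ ^ 2 | m]
      =ᵐ[μ] (fun _ => 1) + t • μ[ξ | m] + κ • μ[ξ ^ 2 | m] := by
    filter_upwards [condExp_add ((integrable_const 1).add (hξi.smul t)) (hξ2i.smul κ) m,
      condExp_add (integrable_const 1) (hξi.smul t) m, condExp_smul t ξ m,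
      condExp_smul κ (ξ ^ 2) m] with ω h1 h2 h3 h4
    simp only [h1, Pi.add_apply, h2, h3, h4, condExp_const hm]
  filter_upwards [condExp_mono hexpi (((integrable_const 1).add (hξi.smul t)).add (hξ2i.smul κ))
    hquad, hlin, hmean, hvar] with ω h1 h2 h3 h4
  rw [h2] at h1
  simp only [Pi.add_apply, Pi.smul_apply, smul_eq_mul, h3, Pi.zero_apply] at h1
  linarith [mul_le_mul_of_nonneg_left h4 (by positivity : 0 ≤ κ), add_one_le_exp (κ * v)]

section Increment

variable (hm : m ≤ m0) {d : Ω → ℝ} {C : ℝ}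

include hm

lemma condExp_sub_condExp_ae_eq_zero (hd : Integrable d μ) : μ[d - μ[d | m] | m] =ᵐ[μ] 0 := by
  filter_upwards [condExp_sub hd integrable_condExp m] with ω h
  rw [h, condExp_of_stronglyMeasurable hm stronglyMeasurable_condExp integrable_condExp]
  exact sub_self _

lemma condExp_sub_condExp_sq_le (hd : AEStronglyMeasurable d μ) (hdC : ∀ᵐ ω ∂μ, |d ω| ≤ C) :
    μ[(d - μ[d | m]) ^ 2 | m] ≤ᵐ[μ] fun _ => C ^ 2 := by
  have hsq : ∀ᵐ ω ∂μ, |(d ^ 2) ω| ≤ C ^ 2 := hdC.mono fun ω h => by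
    simpa using pow_le_pow_left₀ (abs_nonneg _) h 2
  filter_upwards [condVar_ae_le_condExp_sq hm (MemLp.of_bound hd C (by simpa using hdC)),
    ae_bdd_abs_condExp_of_ae_bdd_abs (m := m) hsq] with ω h1 h2
  exact h1.trans (le_abs_self _ |>.trans h2)

lemma condExp_exp_mul_sub_condExp_le (hd : AEStronglyMeasurable d μ)
    (hdC : ∀ᵐ ω ∂μ, |d ω| ≤ C) (t : ℝ) :
    μ[fun ω => exp (t * (d - μ[d | m]) ω) | m]
      ≤ᵐ[μ] fun _ => exp (t ^ 2 * exp (|t| * (2 * C)) / 2 * C ^ 2) :=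
  condExp_exp_mul_le hm (hd.sub integrable_condExp.1) (abs_sub_condExp_le hdC)
    (condExp_sub_condExp_ae_eq_zero hm (.of_bound hd C (by simpa using hdC)))
    (condExp_sub_condExp_sq_le hm hd hdC) t

end Increment

lemma integral_mul_le_of_condExp_le (hm : m ≤ m0) {f g : Ω → ℝ} {R c : ℝ}
    (hf : StronglyMeasurable[m] f) (hf0 : 0 ≤ f) (hfi : Integrable f μ)
    (hg : AEStronglyMeasurable g μ) (hgR : ∀ᵐ ω ∂μ, |g ω| ≤ R)
    (hgc : μ[g | m] ≤ᵐ[μ] fun _ => c) :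
    ∫ ω, f ω * g ω ∂μ ≤ (∫ ω, f ω ∂μ) * c := by
  have hcR : ∀ᵐ ω ∂μ, ‖μ[g | m] ω‖ ≤ R := ae_bdd_abs_condExp_of_ae_bdd_abs hgR
  calc ∫ ω, f ω * g ω ∂μ = ∫ ω, μ[f * g | m] ω ∂μ := (integral_condExp hm).symm
    _ = ∫ ω, f ω * μ[g | m] ω ∂μ := integral_congr_ae <| condExp_mul_of_stronglyMeasurable_left
        hf (hfi.mul_bdd hg hgR) (.of_bound hg R hgR)
    _ ≤ ∫ ω, f ω * c ∂μ := integral_mono_ae (hfi.mul_bdd integrable_condExp.1 hcR)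
        (hfi.mul_const c) (hgc.mono fun ω h => mul_le_mul_of_nonneg_left h (hf0 ω))
    _ = (∫ ω, f ω ∂μ) * c := integral_mul_const c _

variable {F : Filtration ℕ m0} {ξ : ℕ → Ω → ℝ} {s : ℕ} {b : ℝ}

lemma integrable_exp_mul_sum (hξ : ∀ k, AEStronglyMeasurable (ξ k) μ)
    (hb : ∀ k, s ≤ k → ∀ᵐ ω ∂μ, |ξ k ω| ≤ b) (t : ℝ) (n : ℕ) :
    Integrable (fun ω => exp (t * ∑ k ∈ Ico s n, ξ k ω)) μ := by
  have hall : ∀ᵐ ω ∂μ, ∀ k ∈ Set.Ici s, |ξ k ω| ≤ b := (ae_ball_iff (Set.to_countable _)).2 hb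
  refine .of_bound (continuous_exp.comp_aestronglyMeasurable
    ((Finset.aestronglyMeasurable_fun_sum _ fun k _ => hξ k).const_mul t))
    (exp (|t| * (#(Ico s n) • b))) (hall.mono fun ω h => ?_)
  have hsum : |∑ k ∈ Ico s n, ξ k ω| ≤ #(Ico s n) • b := (abs_sum_le_sum_abs _ _).trans
    (sum_le_card_nsmul _ _ _ fun k hk => h k (mem_Ico.1 hk).1)
  exact abs_exp_mul_le hsum

end Conditional

section Sums

variable {Ω : Type*} {m0 : MeasurableSpace Ω} {μ : Measure Ω} [IsProbabilityMeasure μ]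
  {F : Filtration ℕ m0} {ξ : ℕ → Ω → ℝ} {s : ℕ} {b : ℝ}
  (hξ : ∀ k, StronglyMeasurable[F (k + 1)] (ξ k)) (hb : ∀ k, s ≤ k → ∀ᵐ ω ∂μ, |ξ k ω| ≤ b)
include hξ hb

lemma integral_exp_mul_sum_le {t q : ℝ}
    (hq : ∀ k, s ≤ k → μ[fun ω => exp (t * ξ k ω) | F k] ≤ᵐ[μ] fun _ => exp q)
    {n : ℕ} (hsn : s ≤ n) :
    ∫ ω, exp (t * ∑ k ∈ Ico s n, ξ k ω) ∂μ ≤ exp ((n - s : ℕ) * q) := by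
  have hξ' k : AEStronglyMeasurable (ξ k) μ := ((hξ k).mono (F.le _)).aestronglyMeasurable
  induction n, hsn using Nat.le_induction with
  | base => simp
  | succ n hsn ih =>
    have hsplit : (fun ω => exp (t * ∑ k ∈ Ico s (n + 1), ξ k ω))
        = fun ω => exp (t * ∑ k ∈ Ico s n, ξ k ω) * exp (t * ξ n ω) := by
      ext ω; rw [sum_Ico_succ_top hsn, mul_add, exp_add]
    have hmeas : StronglyMeasurable[F n] fun ω => exp (t * ∑ k ∈ Ico s n, ξ k ω) :=
      (continuous_exp.comp_stronglyMeasurable ((Finset.stronglyMeasurable_fun_sum _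
        fun k hk => (hξ k).mono (F.mono (mem_Ico.1 hk).2)).const_mul t))
    have hstep := integral_mul_le_of_condExp_le (F.le n) hmeas (fun ω => (exp_pos _).le)
      (integrable_exp_mul_sum hξ' hb t n)
      (continuous_exp.comp_aestronglyMeasurable ((hξ' n).const_mul t))
      ((hb n (by lia)).mono fun ω h => abs_exp_mul_le h) (hq n (by lia))
    rw [hsplit]
    calc _ ≤ _ := hstep
      _ ≤ exp ((n - s : ℕ) * q) * exp q := by gcongr
      _ = exp ((n + 1 - s : ℕ) * q) := by
        rw [← exp_add, Nat.sub_add_comm hsn, Nat.cast_succ, add_one_mul]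

lemma measureReal_sum_le_le_exp {c q : ℝ} (hc : 0 ≤ c)
    (hq : ∀ k, s ≤ k → μ[fun ω => exp (-c * ξ k ω) | F k] ≤ᵐ[μ] fun _ => exp q)
    {n : ℕ} (hsn : s ≤ n) (r : ℝ) :
    μ.real {ω | ∑ k ∈ Ico s n, ξ k ω ≤ -r} ≤ exp ((n - s : ℕ) * q - c * r) := by
  have hξ' k : AEStronglyMeasurable (ξ k) μ := ((hξ k).mono (F.le _)).aestronglyMeasurable
  calc _ ≤ exp (-(-c) * -r) * mgf (fun ω => ∑ k ∈ Ico s n, ξ k ω) μ (-c) :=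
        measure_le_le_exp_mul_mgf _ (by linarith) (integrable_exp_mul_sum hξ' hb _ n)
    _ ≤ exp (-(c * r)) * exp ((n - s : ℕ) * q) := by
        rw [mgf]; gcongr
        · linarith
        · exact integral_exp_mul_sum_le hξ hb hq hsn
    _ = _ := by rw [← exp_add]; congr 1; ring

end Sums

section Asymptotics

noncomputable def chernoffTilt (C : ℝ) (n : ℕ) : ℝ := √(5 * log n / n) / C

noncomputable def deviation (C : ℝ) (n : ℕ) : ℝ := √(5 * C ^ 2 * n * log n)

variable {C : ℝ}

lemma chernoffTilt_nonneg (hC : 0 < C) (n : ℕ) : 0 ≤ chernoffTilt C n := by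
  unfold chernoffTilt; positivity

lemma chernoffTilt_sq_mul_sq (hC : 0 < C) (n : ℕ) :
    chernoffTilt C n ^ 2 * C ^ 2 = 5 * log n / n := by
  rw [chernoffTilt, div_pow, sq_sqrt (by have := log_natCast_nonneg n; positivity)]
  field_simp

lemma deviation_eq (hC : 0 < C) (n : ℕ) : deviation C n = n * C ^ 2 * chernoffTilt C n := by
  rcases n.eq_zero_or_pos with rfl | hn
  · simp [deviation]
  have hn' : (0 : ℝ) < n := by exact_mod_cast hn
  rw [deviation, chernoffTilt, show 5 * C ^ 2 * n * log n = (n * C) ^ 2 * (5 * log n / n) by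
    field_simp, sqrt_mul (by positivity), sqrt_sq (by positivity)]
  field_simp

lemma tendsto_chernoffTilt (C : ℝ) : Tendsto (chernoffTilt C) atTop (𝓝 0) := by
  have h : Tendsto (fun n : ℕ => 5 * (log n / n)) atTop (𝓝 (5 * 0)) :=
    (isLittleO_log_id_atTop.tendsto_div_nhds_zero.comp tendsto_natCast_atTop_atTop).const_mul 5
  rw [mul_zero] at h
  show Tendsto (fun n : ℕ => √(5 * log n / n) / C) atTop (𝓝 0)
  simpa only [mul_div_assoc, sqrt_zero, zero_div] using h.sqrt.div_const C

lemma tendsto_deviation_div (hC : 0 < C) :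
    Tendsto (fun n : ℕ => deviation C n / n) atTop (𝓝 0) := by
  refine ((tendsto_chernoffTilt C).const_mul (C ^ 2)).congr' ?_ |>.trans (by simp)
  filter_upwards [eventually_ge_atTop 1] with n hn
  rw [deviation_eq hC]
  field_simp

/-- With the tilt `λ = chernoffTilt C n` the Chernoff exponent is `≈ -(5/2) log n`;
`-(9/4) log n` leaves room for the factors `exp (2 λ C) → 1` and `λ A → 0`. -/
lemma chernoff_exponent_le (hC : 0 < C) (A : ℝ) :
    ∀ᶠ n : ℕ in atTop, n * (chernoffTilt C n ^ 2 * exp (chernoffTilt C n * (2 * C)) / 2 * C ^ 2)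
      - chernoffTilt C n * (deviation C n - A) ≤ -(9 / 4) * log n := by
  have hexp : ∀ᶠ n : ℕ in atTop, exp (chernoffTilt C n * (2 * C)) ≤ 21 / 20 := by
    have := ((tendsto_chernoffTilt C).mul_const (2 * C)).rexp
    rw [zero_mul, exp_zero] at this
    exact this.eventually_le_const (by norm_num)
  have hA : ∀ᶠ n : ℕ in atTop, chernoffTilt C n * A ≤ 1 / 8 := by
    have := (tendsto_chernoffTilt C).mul_const A
    rw [zero_mul] at this
    exact this.eventually_le_const (by norm_num)
  have hlog : ∀ᶠ n : ℕ in atTop, 1 ≤ log n :=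
    (tendsto_log_atTop.comp tendsto_natCast_atTop_atTop).eventually_ge_atTop 1
  filter_upwards [hexp, hA, hlog, eventually_ge_atTop 1] with n h1 h2 h3 hn
  have hn' : (0 : ℝ) < n := by exact_mod_cast hn
  have e1 : n * (chernoffTilt C n ^ 2 * exp (chernoffTilt C n * (2 * C)) / 2 * C ^ 2)
      = 5 / 2 * log n * exp (chernoffTilt C n * (2 * C)) := by
    rw [show chernoffTilt C n ^ 2 * exp (chernoffTilt C n * (2 * C)) / 2 * C ^ 2
      = chernoffTilt C n ^ 2 * C ^ 2 * exp (chernoffTilt C n * (2 * C)) / 2 by ring,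
      chernoffTilt_sq_mul_sq hC]
    field_simp
  have e2 : chernoffTilt C n * deviation C n = 5 * log n := by
    rw [deviation_eq hC, show chernoffTilt C n * (n * C ^ 2 * chernoffTilt C n)
      = n * (chernoffTilt C n ^ 2 * C ^ 2) by ring, chernoffTilt_sq_mul_sq hC]
    field_simp
  rw [e1, mul_sub, e2]
  nlinarith

end Asymptotics

section Noise

variable {Ω : Type*} {m0 : MeasurableSpace Ω} {μ : Measure Ω} {F : Filtration ℕ m0}
  {X : ℕ → Ω → ℝ}

lemma ae_eventually_notMem_of_summable [IsFiniteMeasure μ] {s : ℕ → Set Ω}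
    (hs : Summable fun n => μ.real (s n)) : ∀ᵐ ω ∂μ, ∀ᶠ n in atTop, ω ∉ s n := by
  refine ae_eventually_notMem ?_
  have h : ∑' n, μ (s n) = ENNReal.ofReal (∑' n, μ.real (s n)) := by
    rw [ENNReal.ofReal_tsum_of_nonneg (fun n => measureReal_nonneg) hs]
    exact tsum_congr fun n => (ofReal_measureReal).symm
  exact h ▸ ENNReal.ofReal_ne_top

noncomputable def noise (μ : Measure Ω) (F : Filtration ℕ m0) (X : ℕ → Ω → ℝ) (k : ℕ) :
    Ω → ℝ :=
  (fun ω => X (k + 1) ω - X k ω) - μ[fun ω => X (k + 1) ω - X k ω | F k]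

lemma sum_noise {s n : ℕ} (hsn : s ≤ n) (ω : Ω) :
    ∑ k ∈ Ico s n, noise μ F X k ω
      = X n ω - X s ω - ∑ k ∈ Ico s n, μ[fun ω => X (k + 1) ω - X k ω | F k] ω := by
  simp only [noise, Pi.sub_apply]
  rw [sum_sub_distrib, sum_Ico_sub (fun k => X k ω) hsn]

lemma stronglyMeasurable_increment (hadapt : Adapted F X) (k : ℕ) :
    StronglyMeasurable[F (k + 1)] fun ω => X (k + 1) ω - X k ω :=
  (hadapt (k + 1)).stronglyMeasurable.sub ((hadapt k).stronglyMeasurable.mono (F.mono k.le_succ))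

lemma stronglyMeasurable_noise (hadapt : Adapted F X) (k : ℕ) :
    StronglyMeasurable[F (k + 1)] (noise μ F X k) :=
  (stronglyMeasurable_increment hadapt k).sub (stronglyMeasurable_condExp.mono (F.mono k.le_succ))

variable [IsProbabilityMeasure μ] {C : ℝ} (hadapt : Adapted F X)
  (hbdd : ∀ n : ℕ, 1 ≤ n → ∀ᵐ ω ∂μ, |X (n + 1) ω - X n ω| ≤ C)
include hadapt hbdd

lemma measureReal_exists_sum_noise_le_le_exp {c : ℝ} (hc : 0 ≤ c) (n : ℕ) (r : ℝ) :
    μ.real {ω | ∃ s ∈ Icc 1 n, ∑ k ∈ Ico s n, noise μ F X k ω ≤ -r}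
      ≤ n * exp (n * (c ^ 2 * exp (c * (2 * C)) / 2 * C ^ 2) - c * r) := by
  set q := c ^ 2 * exp (c * (2 * C)) / 2 * C ^ 2
  have hb (k : ℕ) (hk : 1 ≤ k) : ∀ᵐ ω ∂μ, |noise μ F X k ω| ≤ 2 * C :=
    abs_sub_condExp_le (hbdd k hk)
  have hq (k : ℕ) (hk : 1 ≤ k) :
      μ[fun ω => exp (-c * noise μ F X k ω) | F k] ≤ᵐ[μ] fun _ => exp q := by
    have := condExp_exp_mul_sub_condExp_le (F.le k)
      ((stronglyMeasurable_increment hadapt k).mono (F.le _)).aestronglyMeasurable (hbdd k hk) (-c)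
    rwa [neg_sq, abs_neg, abs_of_nonneg hc] at this
  have hset : {ω | ∃ s ∈ Icc 1 n, ∑ k ∈ Ico s n, noise μ F X k ω ≤ -r}
      = ⋃ s ∈ Icc 1 n, {ω | ∑ k ∈ Ico s n, noise μ F X k ω ≤ -r} := by
    ext; simp
  rw [hset]
  refine (measureReal_biUnion_finset_le _ _).trans ?_
  calc ∑ s ∈ Icc 1 n, μ.real {ω | ∑ k ∈ Ico s n, noise μ F X k ω ≤ -r}
      ≤ #(Icc 1 n) • exp (n * q - c * r) := sum_le_card_nsmul _ _ _ fun s hs => ?_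
    _ = n * exp (n * q - c * r) := by simp
  obtain ⟨hs1, hsn⟩ := mem_Icc.1 hs
  refine (measureReal_sum_le_le_exp (stronglyMeasurable_noise hadapt)
    (fun k hk => hb k (hs1.trans hk)) hc (fun k hk => hq k (hs1.trans hk)) hsn r).trans ?_
  gcongr
  exact_mod_cast n.sub_le s

lemma ae_eventually_lt_sum_noise (hC : 0 < C) (A : ℝ) :
    ∀ᵐ ω ∂μ, ∀ᶠ n in atTop, ∀ s ∈ Icc 1 n, A - deviation C n < ∑ k ∈ Ico s n, noise μ F X k ω := by
  set bad := fun n : ℕ =>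
    {ω | ∃ s ∈ Icc 1 n, ∑ k ∈ Ico s n, noise μ F X k ω ≤ -(deviation C n - A)}
  have hsum : Summable fun n => μ.real (bad n) := by
    refine .of_norm_bounded_eventually_nat (g := fun n : ℕ => (n : ℝ) ^ (-(5 / 4) : ℝ))
      (summable_nat_rpow.2 (by norm_num)) ?_
    filter_upwards [chernoff_exponent_le hC A, eventually_ge_atTop 1] with n hE hn
    have hn' : (0 : ℝ) < n := by exact_mod_cast hn
    rw [norm_of_nonneg measureReal_nonneg]
    calc μ.real (bad n) ≤ _ := measureReal_exists_sum_noise_le_le_exp hadapt hbdd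
          (chernoffTilt_nonneg hC n) n (deviation C n - A)
      _ ≤ exp (log n) * exp (-(9 / 4) * log n) := by rw [exp_log hn']; gcongr
      _ = (n : ℝ) ^ (-(5 / 4) : ℝ) := by rw [← exp_add, rpow_def_of_pos hn']; ring_nf
  filter_upwards [ae_eventually_notMem_of_summable hsum] with ω hω
  filter_upwards [hω] with n hn s hs
  by_contra! h
  exact hn ⟨s, hs, by linarith⟩

end Noise

end PositiveDrift

open PositiveDrift

theorem positive_drift_process_linear_growth_general
    {Ω : Type*} {m0 : MeasurableSpace Ω} (μ : Measure Ω) [IsProbabilityMeasure μ]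
    (F : Filtration ℕ m0) (X : ℕ → Ω → ℝ) (hadapt : Adapted F X)
    (ε J C : ℝ) (hC : 0 < C)
    (hstart : ∀ᵐ ω ∂μ, 0 ≤ X 1 ω)
    (hbdd : ∀ n : ℕ, 1 ≤ n → ∀ᵐ ω ∂μ, |X (n + 1) ω - X n ω| ≤ C)
    (hdrift : ∀ n : ℕ, 1 ≤ n → ∀ᵐ ω ∂μ,
      X n ω < J * n → ε ≤ (μ[(fun ω' => X (n + 1) ω' - X n ω') | F n]) ω) :
    (∀ᵐ ω ∂μ, ∀ᶠ n : ℕ in atTop,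
      min J ε * n - Real.sqrt (5 * C ^ 2 * n * Real.log n) ≤ X n ω) ∧
    (∀ᵐ ω ∂μ, min J ε ≤ liminf (fun n : ℕ => X n ω / n) atTop) := by
  have hbdd' := (ae_ball_iff (Set.to_countable (Set.Ici 1))).2 hbdd
  have hlower : ∀ᵐ ω ∂μ, ∀ᶠ n : ℕ in atTop, min J ε * n - deviation C n ≤ X n ω := by
    filter_upwards [ae_eventually_lt_sum_noise hadapt hbdd hC (min J ε + C), hstart, hbdd',
      (ae_ball_iff (Set.to_countable (Set.Ici 1))).2 hdrift] with ω hnoise h1 hstep hdr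
    filter_upwards [hnoise, eventually_ge_atTop 1] with n hn hn1
    have := le_of_drift_below_line (C := C) (t := deviation C n - (min J ε + C))
      (min_le_left J ε) (min_le_right J ε) (by linarith)
      (fun k hk => by linarith [(abs_le.1 (hstep k hk)).1]) hdr hn1
      (fun s hs => by linarith [hn s hs, sum_noise (μ := μ) (F := F) (X := X) (mem_Icc.1 hs).2 ω])
    linarith
  refine ⟨hlower, ?_⟩
  filter_upwards [hlower, hbdd'] with ω hω hstep
  exact le_liminf_div_of_le (tendsto_deviation_div hC) hω ((eventually_ge_atTop 1).mono
    fun n hn => div_le_abs_add_of_abs_sub_le (x := fun k => X k ω) hC.le hstep hn)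

/-- Linear growth of a process with positive drift below a linear
barrier: if an adapted process starts nonnegative, has increments bounded by `C`, and has
conditional drift at least `ε` whenever `X n < J·n`, then almost surely
`X n ≥ min{J, ε}·n − √(5·C²·n·log n)` for all sufficiently large `n`; in particular,
almost surely `liminf X n/n ≥ min{J, ε} > 0`. -/
theorem positive_drift_process_linear_growth
    {Ω : Type*} {m0 : MeasurableSpace Ω} (μ : Measure Ω) [IsProbabilityMeasure μ]
    (F : Filtration ℕ m0) (X : ℕ → Ω → ℝ) (hadapt : Adapted F X)
    (ε J C : ℝ) (hε : 0 < ε) (hJ : 0 < J) (hC : 0 < C)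
    (hstart : ∀ᵐ ω ∂μ, 0 ≤ X 1 ω)
    (hbdd : ∀ n : ℕ, 1 ≤ n → ∀ᵐ ω ∂μ, |X (n + 1) ω - X n ω| ≤ C)
    (hdrift : ∀ n : ℕ, 1 ≤ n → ∀ᵐ ω ∂μ,
      X n ω < J * n → ε ≤ (μ[(fun ω' => X (n + 1) ω' - X n ω') | F n]) ω) :
    (∀ᵐ ω ∂μ, ∀ᶠ n : ℕ in atTop,
      min J ε * n - Real.sqrt (5 * C ^ 2 * n * Real.log n) ≤ X n ω) ∧
    (∀ᵐ ω ∂μ, min J ε ≤ liminf (fun n : ℕ => X n ω / n) atTop) :=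
  positive_drift_process_linear_growth_general μ F X hadapt ε J C hC hstart hbdd hdrift
end

section
/- Let (a_i)_{i=1}^n and (b_i)_{i=1}^n be finite sequences of positive real numbers with Σ_{i=1}^n a_i = Σ_{i=1}^n b_i and a_j/a_i ≤ b_j/b_i for all 1 ≤ i < j ≤ n. Then Σ_{i=1}^k a_i ≥ Σ_{i=1}^k b_i for every k ∈ {1,...,n}. -/
/-- Prefix-sum comparison: if `(a_i)` and `(b_i)` are positive sequences
with the same total sum and `a_j/a_i ≤ b_j/b_i` for all `i < j`, then every prefix sum of
`a` dominates the corresponding prefix sum of `b`. -/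
theorem prefix_sum_comparison (n : ℕ) (a b : ℕ → ℝ)
    (ha : ∀ i ∈ Finset.Icc 1 n, 0 < a i) (hb : ∀ i ∈ Finset.Icc 1 n, 0 < b i)
    (hsum : ∑ i ∈ Finset.Icc 1 n, a i = ∑ i ∈ Finset.Icc 1 n, b i)
    (hratio : ∀ i ∈ Finset.Icc 1 n, ∀ j ∈ Finset.Icc 1 n, i < j → a j / a i ≤ b j / b i) :
    ∀ k ∈ Finset.Icc 1 n, ∑ i ∈ Finset.Icc 1 k, b i ≤ ∑ i ∈ Finset.Icc 1 k, a i := by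
  -- cross-multiplied form of the ratio hypothesis
  have key : ∀ i ∈ Finset.Icc 1 n, ∀ j ∈ Finset.Icc 1 n, i < j → a j * b i ≤ b j * a i := by
    intro i hi j hj hij
    exact (div_le_div_iff₀ (ha i hi) (hb i hi)).mp (hratio i hi j hj hij)
  intro k hk
  obtain ⟨hk1, hkn⟩ := Finset.mem_Icc.mp hk
  have hak := ha k hk
  have hbk := hb k hk
  set c : ℝ := a k / b k with hc_def
  have hc : 0 < c := div_pos hak hbk
  -- prefix: c * b i ≤ a i for i ≤ k
  have hpre : ∀ i ∈ Finset.Icc 1 k, c * b i ≤ a i := by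
    intro i hi
    obtain ⟨hi1, hik⟩ := Finset.mem_Icc.mp hi
    have hin : i ∈ Finset.Icc 1 n := Finset.mem_Icc.mpr ⟨hi1, hik.trans hkn⟩
    rcases lt_or_eq_of_le hik with h | h
    · have := key i hin k hk h
      have hbi := hb i hin
      rw [hc_def, div_mul_eq_mul_div, div_le_iff₀ hbk]
      nlinarith
    · subst h
      rw [hc_def, div_mul_cancel₀ _ (ne_of_gt hbk)]
  -- tail: a j ≤ c * b j for j > k
  have htail : ∀ j ∈ Finset.Ioc k n, a j ≤ c * b j := by
    intro j hj
    obtain ⟨hkj, hjn⟩ := Finset.mem_Ioc.mp hj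
    have hjI : j ∈ Finset.Icc 1 n := Finset.mem_Icc.mpr ⟨hk1.trans hkj.le, hjn⟩
    have := key k hk j hjI hkj
    rw [hc_def, div_mul_eq_mul_div, le_div_iff₀ hbk]
    nlinarith
  -- sum split
  have hIcc : ∀ m : ℕ, Finset.Icc 1 m = Finset.Ioc 0 m := by
    intro m; ext x; simp [Nat.lt_iff_add_one_le]
  have hsplit_a : ∑ i ∈ Finset.Icc 1 k, a i + ∑ i ∈ Finset.Ioc k n, a i
      = ∑ i ∈ Finset.Icc 1 n, a i := by
    rw [hIcc, hIcc]; exact Finset.sum_Ioc_consecutive a (Nat.zero_le k) hkn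
  have hsplit_b : ∑ i ∈ Finset.Icc 1 k, b i + ∑ i ∈ Finset.Ioc k n, b i
      = ∑ i ∈ Finset.Icc 1 n, b i := by
    rw [hIcc, hIcc]; exact Finset.sum_Ioc_consecutive b (Nat.zero_le k) hkn
  rcases le_total c 1 with hc1 | hc1
  · -- tail of a is at most tail of b
    have : ∑ i ∈ Finset.Ioc k n, a i ≤ ∑ i ∈ Finset.Ioc k n, b i := by
      apply Finset.sum_le_sum
      intro j hj
      obtain ⟨hkj, hjn⟩ := Finset.mem_Ioc.mp hj
      have hjI : j ∈ Finset.Icc 1 n := Finset.mem_Icc.mpr ⟨hk1.trans hkj.le, hjn⟩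
      have hbj := hb j hjI
      calc a j ≤ c * b j := htail j hj
        _ ≤ 1 * b j := by nlinarith
        _ = b j := one_mul _
    linarith
  · -- prefix of b is at most prefix of a directly
    apply Finset.sum_le_sum
    intro i hi
    obtain ⟨hi1, hik⟩ := Finset.mem_Icc.mp hi
    have hin : i ∈ Finset.Icc 1 n := Finset.mem_Icc.mpr ⟨hi1, hik.trans hkn⟩
    have hbi := hb i hin
    calc b i = 1 * b i := (one_mul _).symm
      _ ≤ c * b i := by nlinarith
      _ ≤ a i := hpre i hi
end
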